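/- arXiv:2603.11784 — 11 statements merged into one kernel-verified Lean document; each statement's English description precedes it below -/
import Mathlib

section
/- If a hypothesis class H over a countable domain X (with every hypothesis having infinite support) is uniformly generatable with sample complexity d*, then H is uniformly generatable with replay with the same sample complexity d*. Concretely: given a generator G such that for every h in H and every sequence of examples from supp(h), once d* distinct examples have appeared all subsequent outputs of G lie in supp(h) and are previously unseen, one can construct a generator G~ (which repeats the first example until d* distinct examples have been observed, and then copies G) such that for every h in H and every replay sequence for h and G~ (each example lies in supp(h) or equals a previous output of G~), once d* distinct examples have appeared, all subsequent outputs of G~ lie in supp(h) and are previously unseen. -/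
/-- Output of generator `G` after seeing the first `s` examples of the stream `x`. -/
def Out {X : Type*} (G : List X → X) (x : ℕ → X) (s : ℕ) : X :=
  G ((List.range s).map x)

/-- `x` is a replay sequence for the hypothesis (support) `h` and generator `G`:
every example lies in `h` or equals a previous output of `G`. -/
def ReplaySeq {X : Type*} (h : Set X) (G : List X → X) (x : ℕ → X) : Prop :=
  ∀ t, x t ∈ h ∨ ∃ s, 1 ≤ s ∧ s ≤ t ∧ x t = Out G x s

/-- Uniform-generation success criterion with sample complexity `d`: once `d`
distinct examples have appeared, all subsequent outputs lie in `h` and are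
previously unseen. -/
def UnifSucc {X : Type*} [DecidableEq X] (h : Set X) (G : List X → X)
    (x : ℕ → X) (d : ℕ) : Prop :=
  ∀ t, ((Finset.range t).image x).card = d →
    ∀ s, t ≤ s → Out G x s ∈ h ∧ ∀ r < s, Out G x s ≠ x r

/-!
Let `G̃` output the first example while fewer than `d` distinct examples have been seen, and
copy `G` afterwards. By strong induction every example of a replay sequence lies in `h`: a
replayed output from the first phase is the first example, which cannot itself be a replay;
one from the second phase is `G` applied to a prefix of examples in `h`, which we pad (with the
first example) to a full sequence in `h` whose number of distinct examples reaches exactly `d`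
at some earlier time, so the guarantee of `G` applies. Hence the replay sequence is an ordinary
sequence for `h`, on which `G̃` agrees with `G` from the moment `d` distinct examples appear.
-/

open Finset

lemma Nat.exists_le_eq_of_le_of_succ_le {c : ℕ → ℕ} (h0 : c 0 = 0)
    (hstep : ∀ n, c (n + 1) ≤ c n + 1) {n d : ℕ} (hd : d ≤ c n) : ∃ m ≤ n, c m = d := by
  induction n with
  | zero => exact ⟨0, le_rfl, by omega⟩
  | succ n ih =>
    by_cases hdn : d ≤ c n
    · obtain ⟨m, hmn, hm⟩ := ih hdn
      exact ⟨m, hmn.trans n.le_succ, hm⟩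
    · exact ⟨n + 1, le_rfl, by have := hstep n; omega⟩

lemma Out_congr {X : Type*} (G : List X → X) {x y : ℕ → X} {s : ℕ} (hxy : ∀ r < s, x r = y r) :
    Out G x s = Out G y s :=
  congrArg G (List.map_congr_left fun r hr => hxy r (List.mem_range.mp hr))

section ReplayGenerator

variable {X : Type*} [DecidableEq X]

lemma toFinset_map_range (x : ℕ → X) (s : ℕ) :
    ((List.range s).map x).toFinset = (range s).image x := by
  ext; simp

lemma exists_le_card_image_range_eq (x : ℕ → X) {n d : ℕ}
    (hd : d ≤ ((range n).image x).card) : ∃ m ≤ n, ((range m).image x).card = d :=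
  Nat.exists_le_eq_of_le_of_succ_le (by simp)
    (fun n => by rw [range_add_one, image_insert]; exact card_insert_le _ _) hd

def replayGenerator (G : List X → X) (d : ℕ) (l : List X) : X :=
  if l.toFinset.card < d then l.headD (G l) else G l

variable (G : List X → X) (d : ℕ) (x : ℕ → X) {s : ℕ}

lemma Out_replayGenerator_of_card_lt (hs : 0 < s) (hc : ((range s).image x).card < d) :
    Out (replayGenerator G d) x s = x 0 := by
  obtain ⟨k, rfl⟩ := Nat.exists_eq_succ_of_ne_zero hs.ne'
  rw [Out, replayGenerator, toFinset_map_range, if_pos hc]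
  simp [List.range_succ_eq_map]

lemma Out_replayGenerator_of_le_card (hc : d ≤ ((range s).image x).card) :
    Out (replayGenerator G d) x s = Out G x s := by
  rw [Out, replayGenerator, toFinset_map_range, if_neg hc.not_gt, Out]

variable {G d x} {h : Set X}

lemma Out_mem_of_le_card (hG : ∀ y : ℕ → X, (∀ t, y t ∈ h) → UnifSucc h G y d)
    {a : X} (ha : a ∈ h) (hx : ∀ r < s, x r ∈ h) (hc : d ≤ ((range s).image x).card) :
    Out G x s ∈ h := by
  set y : ℕ → X := fun r => if r < s then x r else a
  have hxy : ∀ r < s, x r = y r := fun r hr => (if_pos hr).symm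
  have hy : ∀ t, y t ∈ h := fun t => by
    by_cases ht : t < s
    · exact (hxy t ht) ▸ hx t ht
    · simpa [y, ht] using ha
  obtain ⟨m, hms, hm⟩ := exists_le_card_image_range_eq x hc
  have himage : (range m).image y = (range m).image x :=
    image_congr fun r hr => (hxy r ((mem_range.mp hr).trans_le hms)).symm
  rw [Out_congr G hxy]
  exact (hG y hy m (himage ▸ hm) s hms).1

lemma ReplaySeq.mem_of_replayGenerator (hG : ∀ y : ℕ → X, (∀ t, y t ∈ h) → UnifSucc h G y d)
    (hx : ReplaySeq h (replayGenerator G d) x) (t : ℕ) : x t ∈ h := by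
  have hx0 : x 0 ∈ h := (hx 0).resolve_right fun ⟨s, hs1, hs0, _⟩ => by omega
  induction t using Nat.strong_induction_on with
  | _ t ih =>
    rcases hx t with hmem | ⟨s, hs1, hst, hreplay⟩
    · exact hmem
    rw [hreplay]
    by_cases hc : ((range s).image x).card < d
    · rwa [Out_replayGenerator_of_card_lt G d x hs1 hc]
    · rw [Out_replayGenerator_of_le_card G d x (not_lt.mp hc)]
      exact Out_mem_of_le_card hG hx0 (fun r hr => ih r (hr.trans_le hst)) (not_lt.mp hc)

end ReplayGenerator

theorem statement0_general {X : Type*} [DecidableEq X]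
    (H : Set (Set X))
    (G : List X → X) (d : ℕ)
    (hG : ∀ h ∈ H, ∀ x : ℕ → X, (∀ t, x t ∈ h) → UnifSucc h G x d) :
    ∃ G' : List X → X, ∀ h ∈ H, ∀ x : ℕ → X,
      ReplaySeq h G' x → UnifSucc h G' x d := by
  refine ⟨replayGenerator G d, fun h hH x hx t ht s hts => ?_⟩
  have hmem := hx.mem_of_replayGenerator (hG h hH)
  have hc : d ≤ ((range s).image x).card :=
    ht ▸ card_le_card (image_subset_image (range_subset_range.mpr hts))
  rw [Out_replayGenerator_of_le_card G d x hc]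
  exact hG h hH x hmem t ht s hts

/-- If `H` is uniformly generatable with sample complexity `d`, then `H` is
uniformly generatable with replay with the same sample complexity `d`. -/
theorem statement0 {X : Type*} [Countable X] [DecidableEq X]
    (H : Set (Set X)) (hUUS : ∀ h ∈ H, h.Infinite)
    (G : List X → X) (d : ℕ)
    (hG : ∀ h ∈ H, ∀ x : ℕ → X, (∀ t, x t ∈ h) → UnifSucc h G x d) :
    ∃ G' : List X → X, ∀ h ∈ H, ∀ x : ℕ → X,
      ReplaySeq h G' x → UnifSucc h G' x d :=
  statement0_general H G d hG
end

section
/- Let X = ℤ. For each n ∈ ℕ define supp(h_n) = {1,...,n} ∪ {x ∈ ℤ : x < 0}, and supp(h_∞) = ℕ. Then the countable class H = {h_∞} ∪ {h_n : n ∈ ℕ} (each support infinite) is NOT non-uniformly generatable with replay: for every generator G there is no assignment of finite sample complexities d*_h to each h ∈ H making G succeed on all replay sequences. -/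
/-- supp(h_n) = {1,...,n} ∪ {x ∈ ℤ : x < 0}. -/
def suppN (n : ℕ) : Set ℤ := {z | (1 ≤ z ∧ z ≤ (n : ℤ)) ∨ z < 0}

/-- supp(h_∞) = ℕ = {1,2,...} as a subset of ℤ. -/
def suppInf : Set ℤ := {z | 1 ≤ z}

/-- The countable class H = {h_∞} ∪ {h_n : n ∈ ℕ}. -/
def Hclass : Set (Set ℤ) := {suppInf} ∪ {S | ∃ n : ℕ, 1 ≤ n ∧ S = suppN n}

/-- Prefix lists of the adversarial sequence: examples 1,…,m then replays of G. -/
def repList (G : List ℤ → ℤ) (m : ℕ) : ℕ → List ℤ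
  | 0 => []
  | t + 1 => repList G m t ++ [if t < m then ((t : ℤ) + 1) else G (repList G m t)]

/-- The adversarial sequence itself. -/
def repSeq (G : List ℤ → ℤ) (m : ℕ) (t : ℕ) : ℤ :=
  if t < m then ((t : ℤ) + 1) else G (repList G m t)

lemma repList_eq (G : List ℤ → ℤ) (m : ℕ) :
    ∀ s, repList G m s = (List.range s).map (repSeq G m) := by
  intro s
  induction s with
  | zero => rfl
  | succ t ih =>
      rw [List.range_succ, List.map_append]
      simp only [repList, repSeq, ih, List.map_cons, List.map_nil]

/-- H is not non-uniformly generatable with replay. -/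
theorem statement2 :
    ¬ ∃ G : List ℤ → ℤ, ∀ h ∈ Hclass, ∃ d : ℕ,
        ∀ x : ℕ → ℤ, ReplaySeq h G x →
          ∀ t, ((Finset.range t).image x).card = d →
            ∀ s, t ≤ s → Out G x s ∈ h ∧ ∀ r < s, Out G x s ≠ x r := by
  rintro ⟨G, hG⟩
  obtain ⟨d, hd⟩ := hG suppInf (Or.inl rfl)
  set m : ℕ := max d 1 with hm
  set z : ℕ → ℤ := repSeq G m with hz
  have hdm : d ≤ m := le_max_left d 1
  have hm1 : 1 ≤ m := le_max_right d 1
  have hzsmall : ∀ t, t < m → z t = (t : ℤ) + 1 := fun t ht => if_pos ht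
  have hzout : ∀ t, m ≤ t → z t = Out G z t := by
    intro t ht
    show repSeq G m t = _
    rw [repSeq, if_neg (Nat.not_lt.2 ht), Out, ← repList_eq]
  -- z is a replay sequence for suppInf
  have hzrep : ReplaySeq suppInf G z := by
    intro t
    by_cases ht : t < m
    · left
      rw [hzsmall t ht]
      exact le_add_of_nonneg_left (Int.ofNat_nonneg t)
    · push_neg at ht
      exact Or.inr ⟨t, le_trans hm1 ht, le_refl t, hzout t ht⟩
  have hcard : ((Finset.range d).image z).card = d := by
    rw [Finset.card_image_of_injOn, Finset.card_range]
    intro a ha b hb hab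
    simp only [Finset.coe_range, Set.mem_Iio] at ha hb
    rw [hzsmall a (lt_of_lt_of_le ha hdm), hzsmall b (lt_of_lt_of_le hb hdm)] at hab
    exact_mod_cast add_right_cancel hab
  have hkey := hd z hzrep d hcard
  have hzpos : ∀ t, 1 ≤ z t := by
    intro t
    by_cases ht : t < m
    · rw [hzsmall t ht]; exact le_add_of_nonneg_left (Int.ofNat_nonneg t)
    · push_neg at ht
      have := (hkey t (le_trans hdm ht)).1
      rwa [← hzout t ht] at this
  have hzinj : Function.Injective z := by
    have key : ∀ a b : ℕ, a < b → z a ≠ z b := by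
      intro a b hab
      by_cases hb : b < m
      · rw [hzsmall a (lt_trans hab hb), hzsmall b hb]
        intro h
        exact absurd (by exact_mod_cast add_right_cancel h) (Nat.ne_of_lt hab)
      · push_neg at hb
        have := (hkey b (le_trans hdm hb)).2 a hab
        rw [← hzout b hb] at this
        exact fun h => this h.symm
    intro a b hab
    by_contra hne
    rcases lt_or_gt_of_ne hne with h | h
    · exact key a b h hab
    · exact key b a h hab.symm
  -- Now the class suppN m
  obtain ⟨d', hd'⟩ := hG (suppN m) (Or.inr ⟨m, hm1, rfl⟩)
  set N : ℕ := max m d' with hN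
  -- pigeonhole: some s ≥ N with z s > m
  obtain ⟨s, hsN, hsm⟩ : ∃ s, N ≤ s ∧ (m : ℤ) < z s := by
    by_contra h
    push_neg at h
    have hsub : (Finset.Icc N (N + m)).image z ⊆ Finset.Icc (1 : ℤ) (m : ℤ) := by
      intro v hv
      obtain ⟨t, ht, rfl⟩ := Finset.mem_image.1 hv
      exact Finset.mem_Icc.2 ⟨hzpos t, h t (Finset.mem_Icc.1 ht).1⟩
    have h1 : ((Finset.Icc N (N + m)).image z).card = m + 1 := by
      rw [Finset.card_image_of_injective _ hzinj, Nat.card_Icc]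
      omega
    have h2 : (Finset.Icc (1 : ℤ) (m : ℤ)).card = m := by
      rw [Int.card_Icc]
      omega
    have := Finset.card_le_card hsub
    omega
  have hms : m ≤ s := le_trans (le_max_left m d') hsN
  have hd's : d' ≤ s := le_trans (le_max_right m d') hsN
  -- the hybrid sequence
  set y : ℕ → ℤ := fun t => if t < s + 1 then z t else -((t : ℤ) + 1) with hy
  have hyz : ∀ t, t ≤ s → y t = z t := fun t ht => if_pos (Nat.lt_succ_of_le ht)
  have hyneg : ∀ t, s + 1 ≤ t → y t = -((t : ℤ) + 1) := fun t ht =>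
    if_neg (Nat.not_lt.2 ht)
  have hyinj : Function.Injective y := by
    intro a b hab
    by_cases ha : a < s + 1 <;> by_cases hb : b < s + 1
    · rw [hyz a (Nat.lt_succ_iff.1 ha), hyz b (Nat.lt_succ_iff.1 hb)] at hab
      exact hzinj hab
    · push_neg at hb
      rw [hyz a (Nat.lt_succ_iff.1 ha), hyneg b hb] at hab
      have := hzpos a
      omega
    · push_neg at ha
      rw [hyneg a ha, hyz b (Nat.lt_succ_iff.1 hb)] at hab
      have := hzpos b
      omega
    · push_neg at ha hb
      rw [hyneg a ha, hyneg b hb] at hab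
      omega
  have hyout : ∀ t, t ≤ s → Out G y t = Out G z t := by
    intro t ht
    unfold Out
    congr 1
    apply List.map_congr_left
    intro r hr
    exact hyz r (le_trans (Nat.le_of_lt (List.mem_range.1 hr)) ht)
  have hyrep : ReplaySeq (suppN m) G y := by
    intro t
    by_cases ht : t < m
    · left
      rw [hyz t (le_trans (Nat.le_of_lt ht) hms), hzsmall t ht]
      left
      constructor
      · exact le_add_of_nonneg_left (Int.ofNat_nonneg t)
      · exact_mod_cast Nat.succ_le_of_lt ht
    · push_neg at ht
      by_cases hts : t ≤ s
      · right
        refine ⟨t, le_trans hm1 ht, le_refl t, ?_⟩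
        rw [hyz t hts, hyout t hts]
        exact hzout t ht
      · left
        push_neg at hts
        right
        rw [hyneg t hts]
        have : (0 : ℤ) ≤ (t : ℤ) := Int.ofNat_nonneg t
        omega
  have hycard : ((Finset.range d').image y).card = d' := by
    rw [Finset.card_image_of_injective _ hyinj, Finset.card_range]
  have hout := (hd' y hyrep d' hycard s hd's).1
  rw [hyout s (le_refl s), ← hzout s hms] at hout
  rcases hout with ⟨_, h2⟩ | h3
  · omega
  · have := hzpos s
    omega
end

section
/- With X = ℤ, supp(h_n) = {1,...,n} ∪ ℤ_{<0} and supp(h_∞) = ℕ: for any generator G and any d ∈ ℕ, the sequence defined by x_t = t for t ≤ d and x_{t+1} = G(x_1,...,x_t) for t ≥ d is a valid replay sequence for h_∞ and G; moreover, if G satisfies the non-uniform generation guarantee for h_∞ with sample complexity d, then this sequence contains infinitely many distinct elements of ℕ. -/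
/-! The prefix `1, …, d` already has `d` distinct elements, so the guarantee applies from time `d`
on: every later example is the generator's output and hence a fresh element of ℕ. The tail
`x d, x (d+1), …` is therefore injective with values in ℕ. -/

section

variable {X : Type*} {h : Set X} {G : List X → X} {x : ℕ → X} {d : ℕ}

theorem replaySeq_of_forall_lt_mem (hd : 1 ≤ d) (hpre : ∀ t < d, x t ∈ h)
    (hout : ∀ t, d ≤ t → x t = Out G x t) : ReplaySeq h G x := by
  intro t
  rcases lt_or_ge t d with ht | ht
  · exact .inl (hpre t ht)
  · exact .inr ⟨t, hd.trans ht, le_rfl, hout t ht⟩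

theorem injective_add_left_of_ne_of_lt (hfresh : ∀ s, d ≤ s → ∀ r < s, x s ≠ x r) :
    Function.Injective fun n => x (d + n) := by
  intro a b hab
  rcases lt_trichotomy a b with hlt | heq | hgt
  · exact absurd hab.symm (hfresh (d + b) (by omega) (d + a) (by omega))
  · exact heq
  · exact absurd hab (hfresh (d + a) (by omega) (d + b) (by omega))

theorem infinite_mem_and_exists_eq_of_ne_of_lt (hmem : ∀ s, d ≤ s → x s ∈ h)
    (hfresh : ∀ s, d ≤ s → ∀ r < s, x s ≠ x r) : {z | z ∈ h ∧ ∃ t, x t = z}.Infinite :=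
  Set.infinite_of_injective_forall_mem (injective_add_left_of_ne_of_lt hfresh)
    fun n => ⟨hmem (d + n) (Nat.le_add_right d n), d + n, rfl⟩

end

theorem card_image_range_of_eq_add_one {x : ℕ → ℤ} {d : ℕ} (hx : ∀ t < d, x t = (t : ℤ) + 1) :
    ((Finset.range d).image x).card = d := by
  rw [Finset.card_image_of_injOn, Finset.card_range]
  intro a ha b hb hab
  rw [Finset.coe_range, Set.mem_Iio] at ha hb
  rw [hx a ha, hx b hb] at hab
  exact_mod_cast add_right_cancel hab

/-- The adversarial sequence: the first `d` examples are `1,...,d`, and afterwards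
each example is the generator's most recent output.  It is a valid replay sequence
for h_∞ and `G`; moreover, if `G` satisfies the non-uniform guarantee for h_∞ with
sample complexity `d`, the sequence contains infinitely many distinct elements of ℕ. -/
theorem statement3 (G : List ℤ → ℤ) (d : ℕ) (hd : 1 ≤ d) (x : ℕ → ℤ)
    (hx1 : ∀ t < d, x t = (t : ℤ) + 1)
    (hx2 : ∀ t, d ≤ t → x t = Out G x t) :
    ReplaySeq suppInf G x ∧
      ((∀ t, ((Finset.range t).image x).card = d →
          ∀ s, t ≤ s → Out G x s ∈ suppInf ∧ ∀ r < s, Out G x s ≠ x r) →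
        {z : ℤ | 1 ≤ z ∧ ∃ t, x t = z}.Infinite) := by
  refine ⟨replaySeq_of_forall_lt_mem hd (fun t ht => ?_) hx2, fun hG => ?_⟩
  · rw [suppInf, Set.mem_ofPred_eq, hx1 t ht]
    omega
  have hgen := hG d (card_image_range_of_eq_add_one hx1)
  refine infinite_mem_and_exists_eq_of_ne_of_lt (h := suppInf) (d := d) (fun s hs => ?_)
    fun s hs => ?_
  · exact hx2 s hs ▸ (hgen s hs).1
  · exact hx2 s hs ▸ (hgen s hs).2
end

section
/- Let X = ℤ ∪ {*^n : n ∈ ℕ}. For b ∈ ℕ₀ define H^b_1 = {h : supp(h) = {b} ∪ A ∪ {x ∈ ℤ : x > j} for some A ⊆ ℤ, j > b} and H^b_2 = {h : supp(h) = {x ∈ ℤ : x < b} ∪ A for some A ⊆ ℤ \ {b}}. Let H̃^b_i be obtained by adding the markers {*^k : 1 ≤ k ≤ b} to each support, and let H = {the hypothesis with support {*^n : n ∈ ℕ}} ∪ ⋃_{b∈ℕ₀}(H̃^b_1 ∪ H̃^b_2). Then H is generatable in the limit (in the standard setting without replay). -/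
abbrev XM : Type := ℤ ⊕ ℕ

def ik (z : ℤ) : XM := Sum.inl z
def mk (n : ℕ) : XM := Sum.inr n

def markersUpTo (b : ℕ) : Set XM := {p | ∃ k : ℕ, 1 ≤ k ∧ k ≤ b ∧ p = mk k}

def Htilde1 (b : ℕ) : Set (Set XM) :=
  {S | ∃ (A : Set ℤ) (j : ℤ), (b : ℤ) < j ∧
    S = ({ik (b : ℤ)} ∪ (ik '' A) ∪ {p | ∃ z : ℤ, j < z ∧ p = ik z}) ∪ markersUpTo b}

def Htilde2 (b : ℕ) : Set (Set XM) :=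
  {S | ∃ A : Set ℤ, (b : ℤ) ∉ A ∧
    S = ({p | ∃ z : ℤ, z < (b : ℤ) ∧ p = ik z} ∪ (ik '' A)) ∪ markersUpTo b}

def allMarkers : Set XM := {p | ∃ n : ℕ, 1 ≤ n ∧ p = mk n}

def HM : Set (Set XM) := {allMarkers} ∪ ⋃ b : ℕ, (Htilde1 b ∪ Htilde2 b)

/- auxiliary -/

def G0 (l : List XM) : XM :=
  let is := l.filterMap Sum.getLeft?
  let ms := l.filterMap Sum.getRight?
  if is = [] then mk (ms.foldr max 0 + 1)
  else if (Int.ofNat (ms.foldr max 0) ∈ is) then ik (is.foldr max 0 + 1)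
  else ik (is.foldr min 0 - 1)

lemma mem_ints {l : List XM} {z : ℤ} :
    z ∈ l.filterMap Sum.getLeft? ↔ (Sum.inl z : XM) ∈ l := by
  simp only [List.mem_filterMap]
  constructor
  · rintro ⟨x, hx, hfx⟩
    cases x with
    | inl a => simp only [Sum.getLeft?, Option.some.injEq] at hfx; subst hfx; exact hx
    | inr a => simp [Sum.getLeft?] at hfx
  · intro hx; exact ⟨Sum.inl z, hx, rfl⟩

lemma mem_mks {l : List XM} {n : ℕ} :
    n ∈ l.filterMap Sum.getRight? ↔ (Sum.inr n : XM) ∈ l := by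
  simp only [List.mem_filterMap]
  constructor
  · rintro ⟨x, hx, hfx⟩
    cases x with
    | inr a => simp only [Sum.getRight?, Option.some.injEq] at hfx; subst hfx; exact hx
    | inl a => simp [Sum.getRight?] at hfx
  · intro hx; exact ⟨Sum.inr n, hx, rfl⟩

lemma le_foldr_max {α : Type*} [LinearOrder α] {l : List α} {a : α} (x0 : α)
    (h : a ∈ l) : a ≤ l.foldr max x0 := by
  induction l with
  | nil => simp at h
  | cons c t ih =>
    rcases List.mem_cons.mp h with rfl | h
    · exact le_max_left _ _
    · exact le_trans (ih h) (le_max_right _ _)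

lemma foldr_min_le {α : Type*} [LinearOrder α] {l : List α} {a : α} (x0 : α)
    (h : a ∈ l) : l.foldr min x0 ≤ a := by
  induction l with
  | nil => simp at h
  | cons c t ih =>
    rcases List.mem_cons.mp h with rfl | h
    · exact min_le_left _ _
    · exact le_trans (min_le_right _ _) (ih h)

lemma foldr_max_le {α : Type*} [LinearOrder α] {l : List α} {x0 c : α}
    (h0 : x0 ≤ c) (h : ∀ a ∈ l, a ≤ c) : l.foldr max x0 ≤ c := by
  induction l with
  | nil => exact h0
  | cons d t ih =>
    simp only [List.foldr_cons]
    exact max_le (h d (by simp)) (ih (fun a ha => h a (by simp [ha])))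

/-- H is generatable in the limit (standard setting, no replay). -/
theorem statement5 :
    ∃ G : List XM → XM, ∀ h ∈ HM, ∀ x : ℕ → XM,
      (∀ t, x t ∈ h) → (∀ y ∈ h, ∃ t, x t = y) →
      ∃ tstar : ℕ, ∀ s, tstar ≤ s → Out G x s ∈ h ∧ ∀ r < s, Out G x s ≠ x r := by
  refine ⟨G0, ?_⟩
  intro h hH x hx hsur
  have hmem : ∀ s : ℕ, ∀ y : XM, y ∈ (List.range s).map x ↔ ∃ r < s, x r = y := by
    intro s y
    simp only [List.mem_map, List.mem_range]
  rcases hH with hA | hU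
  · -- h = allMarkers
    simp only [Set.mem_singleton_iff] at hA
    subst hA
    refine ⟨0, fun s _ => ?_⟩
    set l := (List.range s).map x with hl
    have hints : l.filterMap Sum.getLeft? = [] := by
      rw [List.eq_nil_iff_forall_not_mem]
      intro z hz
      rw [mem_ints, hmem] at hz
      obtain ⟨r, _, hr⟩ := hz
      obtain ⟨n, _, hn⟩ := hx r
      rw [hr] at hn
      exact (Sum.inl_ne_inr hn)
    have hout : Out G0 x s = mk ((l.filterMap Sum.getRight?).foldr max 0 + 1) := by
      rw [Out, ← hl, G0]
      simp [hints]
    constructor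
    · rw [hout]; exact ⟨_, Nat.succ_le_succ (Nat.zero_le _), rfl⟩
    · intro r hr hne
      rw [hout] at hne
      have hxr : x r ∈ l := by rw [hmem]; exact ⟨r, hr, rfl⟩
      rw [← hne] at hxr
      have : (l.filterMap Sum.getRight?).foldr max 0 + 1 ∈ l.filterMap Sum.getRight? :=
        mem_mks.mpr hxr
      have := le_foldr_max 0 this
      omega
  · -- h in one of the padded classes
    simp only [Set.mem_iUnion] at hU
    obtain ⟨b, hU⟩ := hU
    -- common facts about markers
    obtain ⟨t2, ht2⟩ : ∃ t2 : ℕ, b = 0 ∨ x t2 = mk b := by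
      rcases Nat.eq_zero_or_pos b with hb0 | hb1
      · exact ⟨0, Or.inl hb0⟩
      · have : mk b ∈ h := by
          rcases hU with ⟨A, j, hj, hS⟩ | ⟨A, hA, hS⟩ <;>
            · rw [hS]; right; exact ⟨b, hb1, le_refl _, rfl⟩
        obtain ⟨t, ht⟩ := hsur _ this
        exact ⟨t, Or.inr ht⟩
    have hmarkb : ∀ n : ℕ, (Sum.inr n : XM) ∈ h → n ≤ b := by
      intro n hn
      rcases hU with ⟨A, j, hj, hS⟩ | ⟨A, hA, hS⟩
      · rw [hS] at hn
        rcases hn with ((h1 | h2) | h3) | h4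
        · simp [ik] at h1
        · obtain ⟨z, _, hz⟩ := h2; simp [ik] at hz
        · obtain ⟨z, _, hz⟩ := h3; simp [ik] at hz
        · obtain ⟨k, _, hk, he⟩ := h4; simp only [mk, Sum.inr.injEq] at he; omega
      · rw [hS] at hn
        rcases hn with (h1 | h2) | h3
        · obtain ⟨z, _, hz⟩ := h1; simp [ik] at hz
        · obtain ⟨z, _, hz⟩ := h2; simp [ik] at hz
        · obtain ⟨k, _, hk, he⟩ := h3; simp only [mk, Sum.inr.injEq] at he; omega
    -- the max marker equals b once mk b has been seen (or b = 0)
    have hMb : ∀ s : ℕ, t2 < s →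
        List.foldr max 0 (((List.range s).map x).filterMap Sum.getRight?) = b := by
      intro s hs
      apply le_antisymm
      · apply foldr_max_le (Nat.zero_le _)
        intro n hn
        rw [mem_mks, hmem] at hn
        obtain ⟨r, _, hr⟩ := hn
        exact hmarkb n (hr ▸ hx r)
      · rcases ht2 with hb0 | ht2
        · omega
        · apply le_foldr_max
          rw [mem_mks, hmem]
          exact ⟨t2, hs, ht2⟩
    rcases hU with ⟨A, j, hj, hS⟩ | ⟨A, hA, hS⟩
    · -- Htilde1 b : contains ik b and the tail above j
      have hbmem : ik (b : ℤ) ∈ h := by rw [hS]; left; left; left; rfl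
      have htail : ∀ z : ℤ, j < z → ik z ∈ h := by
        intro z hz; rw [hS]; left; right; exact ⟨z, hz, rfl⟩
      obtain ⟨t0, ht0⟩ := hsur _ hbmem
      obtain ⟨t1, ht1⟩ := hsur _ (htail (j + 1) (by omega))
      refine ⟨max (max t0 t1) t2 + 1, fun s hs => ?_⟩
      set l := (List.range s).map x with hl
      have hbl : (Sum.inl (b : ℤ) : XM) ∈ l := by
        rw [hmem]; exact ⟨t0, by omega, ht0⟩
      have hjl : (Sum.inl (j + 1) : XM) ∈ l := by
        rw [hmem]; exact ⟨t1, by omega, ht1⟩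
      have hbis : (b : ℤ) ∈ l.filterMap Sum.getLeft? := mem_ints.mpr hbl
      have hne : l.filterMap Sum.getLeft? ≠ [] := by
        intro hc; rw [hc] at hbis; simp at hbis
      have hM : (l.filterMap Sum.getRight?).foldr max 0 = b := hMb s (by omega)
      have hMi : Int.ofNat ((l.filterMap Sum.getRight?).foldr max 0) = (b : ℤ) := by
        rw [hM]; rfl
      have hout : Out G0 x s = ik ((l.filterMap Sum.getLeft?).foldr max 0 + 1) := by
        rw [Out, ← hl]
        unfold G0
        rw [if_neg hne, hMi, if_pos hbis]
      set M := (l.filterMap Sum.getLeft?).foldr max 0 with hMdef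
      have hMj : j + 1 ≤ M := le_foldr_max 0 (mem_ints.mpr hjl)
      constructor
      · rw [hout]; exact htail (M + 1) (by omega)
      · intro r hr hne'
        rw [hout] at hne'
        have hxr : x r ∈ l := by rw [hmem]; exact ⟨r, hr, rfl⟩
        rw [← hne'] at hxr
        have := le_foldr_max (l := l.filterMap Sum.getLeft?) 0 (mem_ints.mpr hxr)
        omega
    · -- Htilde2 b : contains everything below b, but not ik b
      have hbelow : ∀ z : ℤ, z < (b : ℤ) → ik z ∈ h := by
        intro z hz; rw [hS]; left; left; exact ⟨z, hz, rfl⟩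
      have hbnot : ik (b : ℤ) ∉ h := by
        rw [hS]
        intro hc
        simp only [Set.mem_union, Set.mem_setOf_eq, Set.mem_image, markersUpTo, ik, mk,
          Sum.inl.injEq, reduceCtorEq, exists_false, and_false, false_and, or_false,
          exists_eq_right] at hc
        rcases hc with hc | hc
        · omega
        · exact hA hc
      obtain ⟨t0, ht0⟩ := hsur _ (hbelow ((b : ℤ) - 1) (by omega))
      refine ⟨max t0 t2 + 1, fun s hs => ?_⟩
      set l := (List.range s).map x with hl
      have hb1l : (Sum.inl ((b : ℤ) - 1) : XM) ∈ l := by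
        rw [hmem]; exact ⟨t0, by omega, ht0⟩
      have hb1is : ((b : ℤ) - 1) ∈ l.filterMap Sum.getLeft? := mem_ints.mpr hb1l
      have hne : l.filterMap Sum.getLeft? ≠ [] := by
        intro hc; rw [hc] at hb1is; simp at hb1is
      have hM : (l.filterMap Sum.getRight?).foldr max 0 = b := hMb s (by omega)
      have hbnotis : (b : ℤ) ∉ l.filterMap Sum.getLeft? := by
        intro hc
        rw [mem_ints, hmem] at hc
        obtain ⟨r, _, hr⟩ := hc
        have := hx r
        rw [hr] at this
        exact hbnot this
      have hMi : Int.ofNat ((l.filterMap Sum.getRight?).foldr max 0) = (b : ℤ) := by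
        rw [hM]; rfl
      have hout : Out G0 x s = ik ((l.filterMap Sum.getLeft?).foldr min 0 - 1) := by
        rw [Out, ← hl]
        unfold G0
        rw [if_neg hne, hMi, if_neg hbnotis]
      set m := (l.filterMap Sum.getLeft?).foldr min 0 with hmdef
      have hmb : m ≤ (b : ℤ) - 1 := foldr_min_le 0 hb1is
      constructor
      · rw [hout]; exact hbelow (m - 1) (by omega)
      · intro r hr hne'
        rw [hout] at hne'
        have hxr : x r ∈ l := by rw [hmem]; exact ⟨r, hr, rfl⟩
        rw [← hne'] at hxr
        have := foldr_min_le (l := l.filterMap Sum.getLeft?) 0 (mem_ints.mpr hxr)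
        omega
end

section
/- With X, H^b_i, H̃^b_i, and H defined as in the marker construction (H = all-marker hypothesis together with all padded classes H̃^b = H̃^b_1 ∪ H̃^b_2), the class H is NOT generatable in the limit with replay: for every generator G there exist a hypothesis h* ∈ H and an enumeration with replay for h* and G on which G outputs an element outside supp(h*)\{x_1,...,x_t} at infinitely many times t. -/
/-!
The adversary interleaves replays of `G` (odd times) with moves of its own (even times). It first
lists the markers `*^1, *^2, …`; if `G` never answers with a new marker, `G` errs at every odd time
on the all-marker hypothesis. Otherwise, once `G` outputs a new marker `*^(b+1)`, the adversary
lists `*^1, …, *^b` and every integer except `b + 1`, skipping what has already appeared. With `A`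
the set of integers it played itself, the resulting sequence is an enumeration with replay of both
`{b} ∪ A ∪ {z > b + 1} ∪ {*^1, …, *^b} ∈ H̃^b_1` and
`{z < b + 1} ∪ A ∪ {*^1, …, *^(b+1)} ∈ H̃^(b+1)_2`.
A new output of `G` is never played later by the adversary, so it is not in `A`: the new outputs
lying in both hypotheses lie in the finite set `{b, *^1, …, *^b}`, hence `G` errs infinitely often
on one of the two.
-/

section Feedback

variable {α : Type*}

def prefixSeq (F : List α → α) : ℕ → List α
  | 0 => []
  | t + 1 => prefixSeq F t ++ [F (prefixSeq F t)]

def feedbackSeq (F : List α → α) (t : ℕ) : α :=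
  F (prefixSeq F t)

theorem prefixSeq_eq_map (F : List α → α) (t : ℕ) :
    prefixSeq F t = (List.range t).map (feedbackSeq F) := by
  induction t with
  | zero => rfl
  | succ t ih => rw [prefixSeq, List.range_succ, List.map_append, List.map_singleton, ← ih]; rfl

theorem feedbackSeq_eq (F : List α → α) (t : ℕ) :
    feedbackSeq F t = F ((List.range t).map (feedbackSeq F)) := by
  rw [feedbackSeq, prefixSeq_eq_map]

theorem feedbackSeq_congr {F F' : List α → α} {n : ℕ}
    (h : ∀ l : List α, l.length ≤ n → F l = F' l) {t : ℕ} (ht : t ≤ n) :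
    feedbackSeq F t = feedbackSeq F' t := by
  induction t using Nat.strong_induction_on with
  | _ t ih =>
    rw [feedbackSeq_eq, feedbackSeq_eq F', h _ (by simpa using ht)]
    congr 1
    exact List.map_congr_left fun r hr ↦ ih r (List.mem_range.1 hr) (by grind)

end Feedback

section Adversary

variable {α : Type*} {G E E' : List α → α}

def adversarySeq (G E : List α → α) : ℕ → α :=
  feedbackSeq fun l ↦ if Odd l.length then G l else E l

theorem adversarySeq_of_odd {t : ℕ} (ht : Odd t) :
    adversarySeq G E t = Out G (adversarySeq G E) t := by
  rw [adversarySeq, feedbackSeq_eq]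
  simp only [List.length_map, List.length_range, if_pos ht]
  rfl

theorem adversarySeq_of_even {t : ℕ} (ht : Even t) :
    adversarySeq G E t = E ((List.range t).map (adversarySeq G E)) := by
  rw [adversarySeq, feedbackSeq_eq]
  simp only [List.length_map, List.length_range, if_neg (Nat.not_odd_iff_even.2 ht)]

theorem adversarySeq_congr {n : ℕ} (h : ∀ l : List α, l.length ≤ n → E l = E' l) {t : ℕ}
    (ht : t ≤ n) : adversarySeq G E t = adversarySeq G E' t :=
  feedbackSeq_congr (fun l hl ↦ by simp only [h l hl]) ht

theorem replaySeq_adversarySeq {h : Set α}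
    (heven : ∀ t, Even t →
      adversarySeq G E t ∈ h ∨ 1 ≤ t ∧ adversarySeq G E t = adversarySeq G E 1) :
    ReplaySeq h G (adversarySeq G E) := by
  intro t
  rcases Nat.even_or_odd t with ht | ht
  · refine (heven t ht).imp_right fun ⟨ht1, hx⟩ ↦ ⟨1, le_rfl, ht1, ?_⟩
    rw [hx, adversarySeq_of_odd odd_one]
  · exact Or.inr ⟨t, ht.pos, le_rfl, adversarySeq_of_odd ht⟩

end Adversary

section Avoid

variable {α : Type*} {G E : List α → α} {τ : ℕ} {e : ℕ → α} {W : Set α}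

open Classical in
/-- At time `τ + 1 + 2k` play `e k` if it lies in `W` and is new, and otherwise replay the
generator's first output. -/
noncomputable def avoidStep (τ : ℕ) (e : ℕ → α) (W : Set α) (G : List α → α) (l : List α) : α :=
  if e ((l.length - τ) / 2) ∈ W ∧ e ((l.length - τ) / 2) ∉ l then e ((l.length - τ) / 2)
  else G (l.take 1)

noncomputable def avoidSeq (G E : List α → α) (τ : ℕ) (e : ℕ → α) (W : Set α) : ℕ → α :=
  adversarySeq G fun l ↦ if l.length ≤ τ then E l else avoidStep τ e W G l

theorem avoidSeq_of_le {t : ℕ} (ht : t ≤ τ) : avoidSeq G E τ e W t = adversarySeq G E t :=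
  adversarySeq_congr (fun _ hl ↦ if_pos hl) ht

theorem avoidSeq_one : avoidSeq G E τ e W 1 = Out G (avoidSeq G E τ e W) 1 :=
  adversarySeq_of_odd odd_one

theorem avoidSeq_cases (hτ : Odd τ) (k : ℕ) :
    (e k ∈ W ∧ (∀ r < τ + 1 + 2 * k, avoidSeq G E τ e W r ≠ e k) ∧
        avoidSeq G E τ e W (τ + 1 + 2 * k) = e k) ∨
      (¬ (e k ∈ W ∧ ∀ r < τ + 1 + 2 * k, avoidSeq G E τ e W r ≠ e k) ∧
        avoidSeq G E τ e W (τ + 1 + 2 * k) = avoidSeq G E τ e W 1) := by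
  have heven : Even (τ + 1 + 2 * k) := by grind
  have hnotMem : e k ∉ (List.range (τ + 1 + 2 * k)).map (avoidSeq G E τ e W) ↔
      ∀ r < τ + 1 + 2 * k, avoidSeq G E τ e W r ≠ e k := by
    simp
  have hfirst : ((List.range (τ + 1 + 2 * k)).map (avoidSeq G E τ e W)).take 1 =
      (List.range 1).map (avoidSeq G E τ e W) := by
    rw [← List.map_take, List.take_range, min_eq_left (by omega)]
  have hstep : avoidSeq G E τ e W (τ + 1 + 2 * k) =
      avoidStep τ e W G ((List.range (τ + 1 + 2 * k)).map (avoidSeq G E τ e W)) := by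
    rw [avoidSeq, adversarySeq_of_even heven]
    exact if_neg (by simp only [List.length_map, List.length_range]; omega)
  have hindex : (((List.range (τ + 1 + 2 * k)).map (avoidSeq G E τ e W)).length - τ) / 2 = k := by
    simp only [List.length_map, List.length_range]; omega
  rw [avoidSeq_one, Out, ← hfirst, hstep, avoidStep, hindex, ← hnotMem]
  split_ifs with h
  · exact Or.inl ⟨h.1, h.2, rfl⟩
  · exact Or.inr ⟨h, rfl⟩

theorem avoidSeq_exists_eq (hτ : Odd τ) {k : ℕ} (hk : e k ∈ W) :
    ∃ t, avoidSeq G E τ e W t = e k := by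
  rcases avoidSeq_cases (G := G) (E := E) hτ k with ⟨-, -, hx⟩ | ⟨hnew, -⟩
  · exact ⟨_, hx⟩
  · push Not at hnew
    obtain ⟨r, -, hr⟩ := hnew hk
    exact ⟨r, hr⟩

theorem avoidSeq_mem_or_eq_one (hτ : Odd τ) (k : ℕ) :
    avoidSeq G E τ e W (τ + 1 + 2 * k) ∈ W ∨
      avoidSeq G E τ e W (τ + 1 + 2 * k) = avoidSeq G E τ e W 1 := by
  rcases avoidSeq_cases (G := G) (E := E) hτ k with ⟨hW, -, hx⟩ | ⟨-, hx⟩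
  · exact Or.inl (hx ▸ hW)
  · exact Or.inr hx

theorem avoidSeq_ne_of_fresh (hτ : Odd τ) {s k : ℕ} (hs : 1 < s) (hsk : s < τ + 1 + 2 * k)
    (hfresh : ∀ r < s, avoidSeq G E τ e W r ≠ avoidSeq G E τ e W s) :
    avoidSeq G E τ e W (τ + 1 + 2 * k) ≠ avoidSeq G E τ e W s := by
  rcases avoidSeq_cases (G := G) (E := E) hτ k with ⟨-, hnew, hx⟩ | ⟨-, hx⟩
  · rw [hx]
    exact (hnew s hsk).symm
  · rw [hx]
    exact hfresh 1 hs

end Avoid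

section Validity

variable {α : Type*}

def IsReplayEnum (h : Set α) (G : List α → α) (x : ℕ → α) : Prop :=
  ReplaySeq h G x ∧ ∀ y ∈ h, ∃ t, x t = y

def IsValidOutput (G : List α → α) (h : Set α) (x : ℕ → α) (s : ℕ) : Prop :=
  Out G x s ∈ h ∧ ∀ r < s, Out G x s ≠ x r

theorem isValidOutput_adversarySeq_iff {G E : List α → α} {h : Set α} {s : ℕ} (hs : Odd s) :
    IsValidOutput G h (adversarySeq G E) s ↔
      adversarySeq G E s ∈ h ∧ ∀ r < s, adversarySeq G E r ≠ adversarySeq G E s := by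
  simp only [IsValidOutput, ← adversarySeq_of_odd hs, ne_comm]

theorem Set.infinite_of_frequently_fresh {x : ℕ → α} {F : Set α}
    (h : ∃ᶠ s in Filter.atTop, x s ∈ F ∧ ∀ r < s, x r ≠ x s) : F.Infinite := by
  have hinj : Set.InjOn x {s | x s ∈ F ∧ ∀ r < s, x r ≠ x s} := by
    intro s hs r hr hsr
    by_contra hne
    rcases lt_or_gt_of_ne hne with hlt | hlt
    · exact hr.2 s hlt hsr
    · exact hs.2 r hlt hsr.symm
  exact ((Nat.frequently_atTop_iff_infinite.1 h).image hinj).mono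
    (Set.image_subset_iff.2 fun _ hs ↦ hs.1)

end Validity

def markerStep (l : List XM) : XM :=
  mk (l.length / 2 + 1)

theorem adversarySeq_markerStep (G : List XM → XM) (u : ℕ) :
    adversarySeq G markerStep (2 * u) = mk (u + 1) := by
  rw [adversarySeq_of_even (even_two_mul u), markerStep]
  simp

theorem isReplayEnum_allMarkers (G : List XM → XM) :
    IsReplayEnum allMarkers G (adversarySeq G markerStep) := by
  refine ⟨replaySeq_adversarySeq fun t ⟨u, ht⟩ ↦ Or.inl ?_, ?_⟩
  · rw [show t = 2 * u by omega, adversarySeq_markerStep]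
    exact ⟨u + 1, by omega, rfl⟩
  · rintro _ ⟨n, hn, rfl⟩
    exact ⟨2 * (n - 1), by rw [adversarySeq_markerStep, Nat.sub_add_cancel hn]⟩

theorem markersUpTo_finite (b : ℕ) : (markersUpTo b).Finite :=
  ((Set.finite_Icc 1 b).image mk).subset fun _ ⟨k, h1, h2, hp⟩ ↦ ⟨k, ⟨h1, h2⟩, hp.symm⟩

theorem mk_mem_markersUpTo {n b : ℕ} : mk n ∈ markersUpTo b ↔ 1 ≤ n ∧ n ≤ b := by
  simp [markersUpTo, mk]

def paddedOne (b : ℕ) (A : Set ℤ) : Set XM :=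
  ({ik (b : ℤ)} ∪ (ik '' A) ∪ {p | ∃ z : ℤ, ((b + 1 : ℕ) : ℤ) < z ∧ p = ik z}) ∪ markersUpTo b

def paddedTwo (b : ℕ) (A : Set ℤ) : Set XM :=
  ({p | ∃ z : ℤ, z < ((b + 1 : ℕ) : ℤ) ∧ p = ik z} ∪ (ik '' A)) ∪ markersUpTo (b + 1)

theorem paddedOne_mem_HM (b : ℕ) (A : Set ℤ) : paddedOne b A ∈ HM :=
  Or.inr (Set.mem_iUnion.2 ⟨b, Or.inl ⟨A, _, by omega, rfl⟩⟩)

theorem paddedTwo_mem_HM {b : ℕ} {A : Set ℤ} (hA : ((b + 1 : ℕ) : ℤ) ∉ A) : paddedTwo b A ∈ HM :=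
  Or.inr (Set.mem_iUnion.2 ⟨b + 1, Or.inr ⟨A, hA, rfl⟩⟩)

theorem paddedOne_inter_paddedTwo_subset (b : ℕ) (A : Set ℤ) :
    paddedOne b A ∩ paddedTwo b A ⊆ insert (ik b) (ik '' A ∪ markersUpTo b) := by
  simp [paddedOne, paddedTwo, markersUpTo, ik, mk, Set.subset_def]
  grind

theorem subset_paddedOne (b : ℕ) (A : Set ℤ) : markersUpTo b ∪ ik '' A ⊆ paddedOne b A := by
  simp [paddedOne, markersUpTo, ik, mk, Set.subset_def]
  grind

theorem subset_paddedTwo (b : ℕ) (A : Set ℤ) : markersUpTo b ∪ ik '' A ⊆ paddedTwo b A := by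
  simp [paddedTwo, markersUpTo, ik, mk, Set.subset_def]
  grind

theorem paddedOne_subset {b : ℕ} {A : Set ℤ} (hA : ((b + 1 : ℕ) : ℤ) ∉ A) :
    paddedOne b A ⊆ markersUpTo (b + 1) ∪ ik '' {z | z ≠ ((b + 1 : ℕ) : ℤ)} := by
  simp [paddedOne, markersUpTo, ik, mk, Set.subset_def]
  grind

theorem paddedTwo_subset {b : ℕ} {A : Set ℤ} (hA : ((b + 1 : ℕ) : ℤ) ∉ A) :
    paddedTwo b A ⊆ markersUpTo (b + 1) ∪ ik '' {z | z ≠ ((b + 1 : ℕ) : ℤ)} := by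
  simp [paddedTwo, markersUpTo, ik, mk, Set.subset_def]
  grind

def targetSet (b : ℕ) : Set XM :=
  ik '' {z | z ≠ ((b + 1 : ℕ) : ℤ)} ∪ markersUpTo b

def fedSet (x : ℕ → XM) (b : ℕ) : Set ℤ :=
  {z | z ≠ ((b + 1 : ℕ) : ℤ) ∧ ∃ t, Even t ∧ x t = ik z}

noncomputable def triggerSeq (G : List XM → XM) (τ b : ℕ) : ℕ → XM :=
  avoidSeq G markerStep τ (Denumerable.ofNat XM) (targetSet b)

section Trigger

variable {G : List XM → XM} {τ b : ℕ}

theorem triggerSeq_even_mem (hτ : Odd τ)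
    (hnew : ∀ r < τ, adversarySeq G markerStep r ≠ mk (b + 1)) {t : ℕ} (ht : Even t) :
    triggerSeq G τ b t ∈ markersUpTo b ∪ ik '' fedSet (triggerSeq G τ b) b ∨
      1 ≤ t ∧ triggerSeq G τ b t = triggerSeq G τ b 1 := by
  obtain ⟨u, rfl⟩ : ∃ u, t = 2 * u := ⟨t / 2, by grind⟩
  rcases lt_or_gt_of_ne (show 2 * u ≠ τ by grind) with hlt | hgt
  · have hu : u + 1 ≤ b := by
      by_contra! hbu
      exact hnew (2 * b) (by omega) (adversarySeq_markerStep G b)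
    left; left
    rw [triggerSeq, avoidSeq_of_le hlt.le, adversarySeq_markerStep]
    exact mk_mem_markersUpTo.2 ⟨by omega, hu⟩
  · obtain ⟨k, hk⟩ : ∃ k, 2 * u = τ + 1 + 2 * k := ⟨(2 * u - τ - 1) / 2, by grind⟩
    rw [hk]
    rcases avoidSeq_mem_or_eq_one (G := G) (E := markerStep) (e := Denumerable.ofNat XM)
      (W := targetSet b) hτ k with (⟨z, hz, hx⟩ | hx) | hx
    · exact Or.inl (Or.inr ⟨z, ⟨hz, _, hk ▸ even_two_mul u, hx.symm⟩, hx⟩)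
    · exact Or.inl (Or.inl hx)
    · exact Or.inr ⟨by omega, hx⟩

theorem exists_triggerSeq_eq (hτ : Odd τ) (hxτ : adversarySeq G markerStep τ = mk (b + 1)) :
    ∀ y ∈ markersUpTo (b + 1) ∪ ik '' {z | z ≠ ((b + 1 : ℕ) : ℤ)}, ∃ t, triggerSeq G τ b t = y := by
  intro y hy
  by_cases hyb : y = mk (b + 1)
  · exact ⟨τ, by rw [triggerSeq, avoidSeq_of_le le_rfl, hxτ, hyb]⟩
  · have hyW : Denumerable.ofNat XM (Encodable.encode y) ∈ targetSet b := by
      rw [Denumerable.ofNat_encode]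
      rcases hy with ⟨n, h1, h2, rfl⟩ | hy
      · exact Or.inr (mk_mem_markersUpTo.2 ⟨h1, by grind⟩)
      · exact Or.inl hy
    rw [← Denumerable.ofNat_encode y]
    exact avoidSeq_exists_eq hτ hyW

theorem triggerSeq_mem_of_fresh (hτ : Odd τ) {s : ℕ} (hs : Odd s) (hτs : τ < s)
    (hfresh : ∀ r < s, triggerSeq G τ b r ≠ triggerSeq G τ b s)
    (hmem : triggerSeq G τ b s ∈
      insert (ik b) (ik '' fedSet (triggerSeq G τ b) b ∪ markersUpTo b)) :
    triggerSeq G τ b s ∈ insert (ik b) (markersUpTo b) := by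
  rcases hmem with hmem | ⟨z, ⟨-, t, ht, hxt⟩, hxs⟩ | hmem
  · exact Or.inl hmem
  · exfalso
    rcases lt_trichotomy t s with hts | rfl | hst
    · exact hfresh t hts (hxt.trans hxs)
    · exact Nat.not_even_iff_odd.2 hs ht
    · obtain ⟨k, rfl⟩ : ∃ k, t = τ + 1 + 2 * k := ⟨(t - τ - 1) / 2, by grind⟩
      exact avoidSeq_ne_of_fresh hτ (by grind) hst hfresh (hxt.trans hxs)
  · exact Or.inr hmem

theorem exists_errs_of_trigger (hτ : Odd τ) (hxτ : adversarySeq G markerStep τ = mk (b + 1))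
    (hnew : ∀ r < τ, adversarySeq G markerStep r ≠ mk (b + 1)) :
    ∃ h ∈ HM, ∃ x, IsReplayEnum h G x ∧ ∃ᶠ s in Filter.atTop, ¬ IsValidOutput G h x s := by
  set x := triggerSeq G τ b
  set A := fedSet x b
  have hA : ((b + 1 : ℕ) : ℤ) ∉ A := fun hA ↦ hA.1 rfl
  have hreplay {h : Set XM} (hh : markersUpTo b ∪ ik '' A ⊆ h) : ReplaySeq h G x :=
    replaySeq_adversarySeq fun _ ht ↦ (triggerSeq_even_mem hτ hnew ht).imp_left (hh ·)
  have henum {h : Set XM} (hh : h ⊆ markersUpTo (b + 1) ∪ ik '' {z | z ≠ ((b + 1 : ℕ) : ℤ)}) :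
      ∀ y ∈ h, ∃ t, x t = y :=
    fun y hy ↦ exists_triggerSeq_eq hτ hxτ y (hh hy)
  have herr : (∃ᶠ s in Filter.atTop, ¬ IsValidOutput G (paddedOne b A) x s) ∨
      ∃ᶠ s in Filter.atTop, ¬ IsValidOutput G (paddedTwo b A) x s := by
    by_contra! hcorrect
    refine ((markersUpTo_finite b).insert (ik b)).not_infinite
      (Set.infinite_of_frequently_fresh (x := x) ?_)
    refine (Nat.frequently_odd.and_eventually
      ((hcorrect.1.and hcorrect.2).and (Filter.eventually_gt_atTop τ))).mono ?_
    rintro s ⟨hs, ⟨hone, htwo⟩, hτs⟩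
    replace hone := (isValidOutput_adversarySeq_iff hs).1 hone
    replace htwo := (isValidOutput_adversarySeq_iff hs).1 htwo
    refine ⟨triggerSeq_mem_of_fresh hτ hs hτs hone.2 ?_, hone.2⟩
    exact paddedOne_inter_paddedTwo_subset b A ⟨hone.1, htwo.1⟩
  rcases herr with herr | herr
  · exact ⟨_, paddedOne_mem_HM b A, x,
      ⟨hreplay (subset_paddedOne b A), henum (paddedOne_subset hA)⟩, herr⟩
  · exact ⟨_, paddedTwo_mem_HM hA, x,
      ⟨hreplay (subset_paddedTwo b A), henum (paddedTwo_subset hA)⟩, herr⟩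

end Trigger

/-- H is not generatable in the limit with replay: for every generator there is a
target hypothesis and an enumeration with replay on which the generator errs
infinitely often. -/
theorem statement6 :
    ∀ G : List XM → XM, ∃ h ∈ HM, ∃ x : ℕ → XM,
      ReplaySeq h G x ∧ (∀ y ∈ h, ∃ t, x t = y) ∧
      ∀ T : ℕ, ∃ s, T ≤ s ∧ ¬ (Out G x s ∈ h ∧ ∀ r < s, Out G x s ≠ x r) := by
  intro G
  suffices ∃ h ∈ HM, ∃ x, IsReplayEnum h G x ∧ ∃ᶠ s in Filter.atTop, ¬ IsValidOutput G h x s by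
    obtain ⟨h, hH, x, ⟨hreplay, henum⟩, herr⟩ := this
    exact ⟨h, hH, x, hreplay, henum, Filter.frequently_atTop.1 herr⟩
  by_cases htrigger : ∃ τ, Odd τ ∧ IsValidOutput G allMarkers (adversarySeq G markerStep) τ
  · obtain ⟨τ, hτ, hvalid⟩ := htrigger
    obtain ⟨⟨n, hn, hxτ⟩, hnew⟩ := (isValidOutput_adversarySeq_iff hτ).1 hvalid
    obtain ⟨b, rfl⟩ : ∃ b, n = b + 1 := ⟨n - 1, by omega⟩
    exact exists_errs_of_trigger hτ hxτ (hxτ ▸ hnew)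
  · push Not at htrigger
    refine ⟨allMarkers, Or.inl rfl, _, isReplayEnum_allMarkers G, ?_⟩
    exact Nat.frequently_odd.mono htrigger
end

section
/- Define over X = ℤ the four hypotheses supp(h_1^-) = ℤ_{≤0} ∪ {1}, supp(h_2^-) = ℤ_{≤0} ∪ {2}, supp(h_1^+) = ℤ_{≥0} ∪ {−1}, supp(h_2^+) = ℤ_{≥0} ∪ {−2}, and let H = {h_1^-, h_2^-, h_1^+, h_2^+}. Then H is not properly generatable in the limit with replay: no proper generator (outputting a hypothesis ĥ_t ∈ H at each round) can, for every target h ∈ H and every admissible sequence enumerating supp(h) in which each example lies in supp(h) or in the support of some previously output hypothesis, eventually output only hypotheses ĥ_t with supp(ĥ_t) ⊆ supp(h). -/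
def h1m : Set ℤ := {z | z ≤ 0} ∪ {1}
def h2m : Set ℤ := {z | z ≤ 0} ∪ {2}
def h1p : Set ℤ := {z | 0 ≤ z} ∪ {-1}
def h2p : Set ℤ := {z | 0 ≤ z} ∪ {-2}

def H4 : Set (Set ℤ) := {h1m, h2m, h1p, h2p}

/-- Hypothesis output by the proper generator `G` after the first `s` examples. -/
def OutH {X : Type*} (G : List X → Set X) (x : ℕ → X) (s : ℕ) : Set X :=
  G ((List.range s).map x)

namespace Statement8Aux

open Classical in
/-- The adversary's next example, given the history `l`. -/
noncomputable def step (G : List ℤ → Set ℤ) (a b : ℤ) (f : ℕ → ℤ) (l : List ℤ) : ℤ :=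
  if l.length % 3 = 0 then f (l.length / 3)
  else if l.length % 3 = 1 then
    (if ∃ s, 1 ≤ s ∧ s ≤ l.length ∧ a ∈ G (l.take s) then a else 0)
  else
    (if ∃ s, 1 ≤ s ∧ s ≤ l.length ∧ b ∈ G (l.take s) then b else 0)

noncomputable def pre (G : List ℤ → Set ℤ) (a b : ℤ) (f : ℕ → ℤ) : ℕ → List ℤ
  | 0 => []
  | n + 1 => pre G a b f n ++ [step G a b f (pre G a b f n)]

noncomputable def seq (G : List ℤ → Set ℤ) (a b : ℤ) (f : ℕ → ℤ) (t : ℕ) : ℤ :=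
  step G a b f (pre G a b f t)

lemma pre_length (G : List ℤ → Set ℤ) (a b : ℤ) (f : ℕ → ℤ) (t : ℕ) :
    (pre G a b f t).length = t := by
  induction t with
  | zero => rfl
  | succ n ih => simp [pre, ih]

lemma pre_take (G : List ℤ → Set ℤ) (a b : ℤ) (f : ℕ → ℤ) {s t : ℕ} (h : s ≤ t) :
    (pre G a b f t).take s = pre G a b f s := by
  induction t with
  | zero => interval_cases s; rfl
  | succ n ih =>
    rcases Nat.lt_or_ge s (n + 1) with h' | h'
    · rw [pre, List.take_append_of_le_length (by rw [pre_length]; omega)]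
      exact ih (by omega)
    · have : s = n + 1 := le_antisymm h h'
      subst this
      exact List.take_of_length_le (le_of_eq (pre_length G a b f (n+1)))

lemma range_map (G : List ℤ → Set ℤ) (a b : ℤ) (f : ℕ → ℤ) (s : ℕ) :
    (List.range s).map (seq G a b f) = pre G a b f s := by
  induction s with
  | zero => rfl
  | succ n ih => rw [List.range_succ, List.map_append, ih]; rfl

lemma outH_eq (G : List ℤ → Set ℤ) (a b : ℤ) (f : ℕ → ℤ) (s : ℕ) :
    OutH G (seq G a b f) s = G (pre G a b f s) := by
  rw [OutH, range_map]

open Classical in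
lemma seq_def (G : List ℤ → Set ℤ) (a b : ℤ) (f : ℕ → ℤ) (t : ℕ) :
    seq G a b f t =
      if t % 3 = 0 then f (t / 3)
      else if t % 3 = 1 then
        (if ∃ s, 1 ≤ s ∧ s ≤ t ∧ a ∈ G (pre G a b f s) then a else 0)
      else
        (if ∃ s, 1 ≤ s ∧ s ≤ t ∧ b ∈ G (pre G a b f s) then b else 0) := by
  have key : ∀ c : ℤ,
      (∃ s, 1 ≤ s ∧ s ≤ t ∧ c ∈ G ((pre G a b f t).take s)) ↔
      (∃ s, 1 ≤ s ∧ s ≤ t ∧ c ∈ G (pre G a b f s)) := by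
    intro c
    constructor <;> rintro ⟨s, h1, h2, h3⟩ <;> refine ⟨s, h1, h2, ?_⟩
    · rwa [pre_take G a b f h2] at h3
    · rwa [pre_take G a b f h2]
  simp only [seq, step, pre_length, key]

/-- The key parametric lemma: the adversary forces the very first output `G [0]`
to be one of `hA`, `hB`. -/
lemma main (G : List ℤ → Set ℤ) (a b : ℤ) (f : ℕ → ℤ)
    (hmem : ∀ l, G l ∈ H4)
    (hsucc : ∀ h ∈ H4, ∀ x : ℕ → ℤ,
      (∀ t, x t ∈ h ∨ ∃ s, 1 ≤ s ∧ s ≤ t ∧ x t ∈ OutH G x s) →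
      (∀ y ∈ h, ∃ t, x t = y) →
      ∃ tstar : ℕ, ∀ s, tstar ≤ s → OutH G x s ⊆ h)
    (hA hB : Set ℤ) (hAH : hA ∈ H4) (hBH : hB ∈ H4)
    (hf0 : f 0 = 0)
    (haA : a ∈ hA) (hbB : b ∈ hB) (h0A : (0:ℤ) ∈ hA) (h0B : (0:ℤ) ∈ hB)
    (hfA : ∀ n, f n ∈ hA) (hfB : ∀ n, f n ∈ hB)
    (covA : ∀ y ∈ hA, y = a ∨ ∃ n, f n = y)
    (covB : ∀ y ∈ hB, y = b ∨ ∃ n, f n = y)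
    (honlyA : ∀ h ∈ H4, b ∉ h → h = hA)
    (honlyB : ∀ h ∈ H4, a ∉ h → h = hB)
    (hdisj : ∀ h ∈ H4, h ⊆ hA → h ⊆ hB → False) :
    G [0] = hA ∨ G [0] = hB := by
  have hpre1 : pre G a b f 1 = [0] := by
    simp [pre, step, hf0]
  by_cases hQb : ∃ s, 1 ≤ s ∧ b ∈ G (pre G a b f s)
  · by_cases hQa : ∃ s, 1 ≤ s ∧ a ∈ G (pre G a b f s)
    · -- both `a` and `b` eventually appear: derive a contradiction
      exfalso
      obtain ⟨sa, hsa1, hsa⟩ := hQa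
      obtain ⟨sb, hsb1, hsb⟩ := hQb
      -- admissibility: the filler values are in h, and a/b carry replay witnesses
      have adm : ∀ (h : Set ℤ), (0:ℤ) ∈ h → (∀ n, f n ∈ h) →
          ∀ t, seq G a b f t ∈ h ∨
            ∃ s, 1 ≤ s ∧ s ≤ t ∧ seq G a b f t ∈ OutH G (seq G a b f) s := by
        intro h h0 hf t
        rw [seq_def]
        split_ifs with h1 h2 h3 h4
        · exact Or.inl (hf _)
        · obtain ⟨s, hs1, hst, hmem'⟩ := h3
          exact Or.inr ⟨s, hs1, hst, by rwa [outH_eq]⟩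
        · exact Or.inl h0
        · obtain ⟨s, hs1, hst, hmem'⟩ := h4
          exact Or.inr ⟨s, hs1, hst, by rwa [outH_eq]⟩
        · exact Or.inl h0
      have hseqa : seq G a b f (3 * sa + 1) = a := by
        rw [seq_def]
        have h0 : ¬ ((3 * sa + 1) % 3 = 0) := by omega
        have h1 : (3 * sa + 1) % 3 = 1 := by omega
        rw [if_neg h0, if_pos h1, if_pos ⟨sa, hsa1, by omega, hsa⟩]
      have hseqb : seq G a b f (3 * sb + 2) = b := by
        rw [seq_def]
        have h0 : ¬ ((3 * sb + 2) % 3 = 0) := by omega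
        have h1 : ¬ ((3 * sb + 2) % 3 = 1) := by omega
        rw [if_neg h0, if_neg h1, if_pos ⟨sb, hsb1, by omega, hsb⟩]
      have hseqf : ∀ n, seq G a b f (3 * n) = f n := by
        intro n
        rw [seq_def]
        have h0 : (3 * n) % 3 = 0 := by omega
        rw [if_pos h0]
        congr 1
        omega
      have cov : ∀ (h : Set ℤ) (c : ℤ), (∀ y ∈ h, y = c ∨ ∃ n, f n = y) →
          (∃ t, seq G a b f t = c) → ∀ y ∈ h, ∃ t, seq G a b f t = y := by
        rintro h c hcov ⟨tc, htc⟩ y hy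
        rcases hcov y hy with rfl | ⟨n, rfl⟩
        · exact ⟨tc, htc⟩
        · exact ⟨3 * n, hseqf n⟩
      obtain ⟨t1, ht1⟩ := hsucc hA hAH (seq G a b f) (adm hA h0A hfA)
        (cov hA a covA ⟨3 * sa + 1, hseqa⟩)
      obtain ⟨t2, ht2⟩ := hsucc hB hBH (seq G a b f) (adm hB h0B hfB)
        (cov hB b covB ⟨3 * sb + 2, hseqb⟩)
      refine hdisj (OutH G (seq G a b f) (max t1 t2)) ?_
        (ht1 _ (le_max_left _ _)) (ht2 _ (le_max_right _ _))
      rw [outH_eq]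
      exact hmem _
    · -- `a` never appears in any output: every output equals hB
      right
      have : G (pre G a b f 1) = hB :=
        honlyB _ (hmem _) (fun hc => hQa ⟨1, le_refl 1, hc⟩)
      rwa [hpre1] at this
  · -- `b` never appears in any output: every output equals hA
    left
    have : G (pre G a b f 1) = hA :=
      honlyA _ (hmem _) (fun hc => hQb ⟨1, le_refl 1, hc⟩)
    rwa [hpre1] at this

end Statement8Aux

/-- H = {h_1^-, h_2^-, h_1^+, h_2^+} is not properly generatable in the limit with
replay: no proper generator (always outputting a hypothesis of H) succeeds on every
target h ∈ H and every admissible sequence enumerating supp(h) in which each example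
lies in supp(h) or in the support of some previously output hypothesis. -/
theorem statement8 :
    ¬ ∃ G : List ℤ → Set ℤ, (∀ l, G l ∈ H4) ∧
        ∀ h ∈ H4, ∀ x : ℕ → ℤ,
          (∀ t, x t ∈ h ∨ ∃ s, 1 ≤ s ∧ s ≤ t ∧ x t ∈ OutH G x s) →
          (∀ y ∈ h, ∃ t, x t = y) →
          ∃ tstar : ℕ, ∀ s, tstar ≤ s → OutH G x s ⊆ h := by
  rintro ⟨G, hmem, hsucc⟩
  have mem_H4 : ∀ h : Set ℤ, h ∈ H4 ↔ h = h1m ∨ h = h2m ∨ h = h1p ∨ h = h2p := by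
    intro h; simp [H4]
  have hp : G [0] = h1p ∨ G [0] = h2p := by
    refine Statement8Aux.main G (-1) (-2) (fun n => (n : ℤ)) hmem hsucc h1p h2p
      ((mem_H4 _).2 (Or.inr (Or.inr (Or.inl rfl))))
      ((mem_H4 _).2 (Or.inr (Or.inr (Or.inr rfl))))
      rfl (Or.inr rfl) (Or.inr rfl) (Or.inl (by norm_num)) (Or.inl (by norm_num))
      (fun n => Or.inl (Int.natCast_nonneg n)) (fun n => Or.inl (Int.natCast_nonneg n))
      ?_ ?_ ?_ ?_ ?_
    · rintro y (hy | hy)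
      · exact Or.inr ⟨y.toNat, Int.toNat_of_nonneg hy⟩
      · exact Or.inl hy
    · rintro y (hy | hy)
      · exact Or.inr ⟨y.toNat, Int.toNat_of_nonneg hy⟩
      · exact Or.inl hy
    · intro h hh hn
      rcases (mem_H4 h).1 hh with rfl | rfl | rfl | rfl
      · exact absurd (Or.inl (by norm_num : (-2:ℤ) ∈ {z : ℤ | z ≤ 0})) hn
      · exact absurd (Or.inl (by norm_num : (-2:ℤ) ∈ {z : ℤ | z ≤ 0})) hn
      · rfl
      · exact absurd (Or.inr rfl) hn
    · intro h hh hn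
      rcases (mem_H4 h).1 hh with rfl | rfl | rfl | rfl
      · exact absurd (Or.inl (by norm_num : (-1:ℤ) ∈ {z : ℤ | z ≤ 0})) hn
      · exact absurd (Or.inl (by norm_num : (-1:ℤ) ∈ {z : ℤ | z ≤ 0})) hn
      · exact absurd (Or.inr rfl) hn
      · rfl
    · intro h hh hs1 hs2
      rcases (mem_H4 h).1 hh with rfl | rfl | rfl | rfl
      · have := hs1 (Or.inl (by norm_num : (-3:ℤ) ∈ {z : ℤ | z ≤ 0}))
        rcases this with h' | h' <;> simp [h1p] at h' <;> omega
      · have := hs1 (Or.inl (by norm_num : (-3:ℤ) ∈ {z : ℤ | z ≤ 0}))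
        rcases this with h' | h' <;> simp [h1p] at h' <;> omega
      · have := hs2 (Or.inr (rfl : (-1:ℤ) ∈ ({-1} : Set ℤ)))
        rcases this with h' | h' <;> simp at h' <;> omega
      · have := hs1 (Or.inr (rfl : (-2:ℤ) ∈ ({-2} : Set ℤ)))
        rcases this with h' | h' <;> simp at h' <;> omega
  have hm : G [0] = h1m ∨ G [0] = h2m := by
    refine Statement8Aux.main G 1 2 (fun n => -(n : ℤ)) hmem hsucc h1m h2m
      ((mem_H4 _).2 (Or.inl rfl))
      ((mem_H4 _).2 (Or.inr (Or.inl rfl)))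
      (by norm_num) (Or.inr rfl) (Or.inr rfl) (Or.inl (by norm_num)) (Or.inl (by norm_num))
      (fun n => Or.inl (by simpa using Int.natCast_nonneg n))
      (fun n => Or.inl (by simpa using Int.natCast_nonneg n))
      ?_ ?_ ?_ ?_ ?_
    · rintro y (hy | hy)
      · refine Or.inr ⟨(-y).toNat, ?_⟩
        simp only [Set.mem_setOf_eq] at hy
        show -(((-y).toNat : ℤ)) = y
        omega
      · exact Or.inl hy
    · rintro y (hy | hy)
      · refine Or.inr ⟨(-y).toNat, ?_⟩
        simp only [Set.mem_setOf_eq] at hy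
        show -(((-y).toNat : ℤ)) = y
        omega
      · exact Or.inl hy
    · intro h hh hn
      rcases (mem_H4 h).1 hh with rfl | rfl | rfl | rfl
      · rfl
      · exact absurd (Or.inr rfl) hn
      · exact absurd (Or.inl (by norm_num : (2:ℤ) ∈ {z : ℤ | 0 ≤ z})) hn
      · exact absurd (Or.inl (by norm_num : (2:ℤ) ∈ {z : ℤ | 0 ≤ z})) hn
    · intro h hh hn
      rcases (mem_H4 h).1 hh with rfl | rfl | rfl | rfl
      · exact absurd (Or.inr rfl) hn
      · rfl
      · exact absurd (Or.inl (by norm_num : (1:ℤ) ∈ {z : ℤ | 0 ≤ z})) hn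
      · exact absurd (Or.inl (by norm_num : (1:ℤ) ∈ {z : ℤ | 0 ≤ z})) hn
    · intro h hh hs1 hs2
      rcases (mem_H4 h).1 hh with rfl | rfl | rfl | rfl
      · have := hs2 (Or.inr (rfl : (1:ℤ) ∈ ({1} : Set ℤ)))
        rcases this with h' | h' <;> simp at h' <;> omega
      · have := hs1 (Or.inr (rfl : (2:ℤ) ∈ ({2} : Set ℤ)))
        rcases this with h' | h' <;> simp at h' <;> omega
      · have := hs1 (Or.inl (by norm_num : (5:ℤ) ∈ {z : ℤ | 0 ≤ z}))
        rcases this with h' | h' <;> simp at h' <;> omega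
      · have := hs1 (Or.inl (by norm_num : (5:ℤ) ∈ {z : ℤ | 0 ≤ z}))
        rcases this with h' | h' <;> simp at h' <;> omega
  have h5L : (5:ℤ) ∈ G [0] := by
    rcases hp with hp | hp <;> rw [hp] <;> exact Or.inl (by norm_num)
  rcases hm with hm | hm <;> rw [hm] at h5L <;>
    rcases h5L with h' | h' <;> simp at h' <;> omega
end

section
/- Let H = {h_1^-, h_2^-, h_1^+, h_2^+} with supp(h_i^-) = ℤ_{≤0} ∪ {i} and supp(h_i^+) = ℤ_{≥0} ∪ {−i}. Suppose a sequence (x_t) with x_1 = 0, x_2 = −1, x_3 = −2, and x_t = t − 3 for t ≥ 4 is given, and the first output hypothesis is ĥ_1 = h_1^-. Then this sequence is simultaneously a valid enumeration with replay (in the proper setting) for both targets h_1^+ and h_2^+: every term lies in supp(h_1^+) ∩ supp(h_2^+) except x_2, x_3, which lie in supp(ĥ_1), and the sequence enumerates both supp(h_1^+) and supp(h_2^+). -/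
/-- The adversarial sequence 0, −1, −2, 1, 2, 3, ... (0-indexed). -/
def xseq : ℕ → ℤ := fun t =>
  if t = 0 then 0 else if t = 1 then -1 else if t = 2 then -2 else (t : ℤ) - 2

/-!
Apart from its second and third terms −1 and −2, the sequence runs through the
nonnegative integers, which lie in both supp(h_1^+) and supp(h_2^+); the two
exceptional terms are nonpositive, hence lie in supp(h_1^-), the hypothesis output
after the first example 0. Every integer ≥ −2 occurs in the sequence, so both
supports are enumerated.
-/

theorem OutH_one {X : Type*} (G : List X → Set X) (x : ℕ → X) : OutH G x 1 = G [x 0] := rfl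

theorem xseq_of_three_le {t : ℕ} (ht : 3 ≤ t) : xseq t = (t : ℤ) - 2 := by
  simp only [xseq, if_neg (show t ≠ 0 by omega), if_neg (show t ≠ 1 by omega),
    if_neg (show t ≠ 2 by omega)]

theorem xseq_nonneg {t : ℕ} (h1 : t ≠ 1) (h2 : t ≠ 2) : 0 ≤ xseq t := by
  rcases Nat.lt_or_ge t 3 with ht | ht
  · interval_cases t <;> simp_all [xseq]
  · rw [xseq_of_three_le ht]
    omega

theorem xseq_nonpos_of_lt_three {t : ℕ} (ht : t < 3) : xseq t ≤ 0 := by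
  interval_cases t <;> simp [xseq]

theorem exists_xseq_eq {y : ℤ} (hy : -2 ≤ y) : ∃ t, xseq t = y := by
  rcases lt_trichotomy y 0 with hneg | rfl | hpos
  · obtain rfl | rfl : y = -1 ∨ y = -2 := by omega
    exacts [⟨1, rfl⟩, ⟨2, rfl⟩]
  · exact ⟨0, rfl⟩
  · refine ⟨(y + 2).toNat, ?_⟩
    rw [xseq_of_three_le (by omega)]
    omega

theorem xseq_mem_OutH_one {G : List ℤ → Set ℤ} (hfirst : G [(0 : ℤ)] = h1m) {t : ℕ}
    (ht : t < 3) : xseq t ∈ OutH G xseq 1 := by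
  rw [OutH_one, show xseq 0 = 0 from rfl, hfirst]
  exact Or.inl (xseq_nonpos_of_lt_three ht)

theorem xseq_mem_or_replayed {G : List ℤ → Set ℤ} (hfirst : G [(0 : ℤ)] = h1m) {h : Set ℤ}
    (hnonneg : {z | 0 ≤ z} ⊆ h) (t : ℕ) :
    xseq t ∈ h ∨ ∃ s, 1 ≤ s ∧ s ≤ t ∧ xseq t ∈ OutH G xseq s := by
  by_cases ht : t = 1 ∨ t = 2
  · exact Or.inr ⟨1, le_refl 1, by omega, xseq_mem_OutH_one hfirst (by omega)⟩
  · rw [not_or] at ht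
    exact Or.inl (hnonneg (xseq_nonneg ht.1 ht.2))

theorem nonneg_subset_h1p : {z : ℤ | 0 ≤ z} ⊆ h1p := Set.subset_union_left

theorem nonneg_subset_h2p : {z : ℤ | 0 ≤ z} ⊆ h2p := Set.subset_union_left

theorem exists_xseq_eq_of_mem_h1p {y : ℤ} (hy : y ∈ h1p) : ∃ t, xseq t = y := by
  refine exists_xseq_eq ?_
  rcases hy with hy | rfl
  · exact le_trans (by norm_num) hy
  · norm_num

theorem exists_xseq_eq_of_mem_h2p {y : ℤ} (hy : y ∈ h2p) : ∃ t, xseq t = y := by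
  refine exists_xseq_eq ?_
  rcases hy with hy | rfl
  · exact le_trans (by norm_num) hy
  · exact le_refl _

/-- If the proper generator's first output hypothesis is h_1^-, then the sequence
0, −1, −2, 1, 2, 3, ... is simultaneously a valid enumeration with replay (in the
proper setting) for both targets h_1^+ and h_2^+: every term lies in
supp(h_1^+) ∩ supp(h_2^+) except the second and third, which lie in supp(ĥ_1),
and the sequence enumerates both supports. -/
theorem statement10 (G : List ℤ → Set ℤ) (hfirst : G [(0 : ℤ)] = h1m) :
    (∀ t : ℕ, (t ≠ 1 ∧ t ≠ 2 → xseq t ∈ h1p ∩ h2p) ∧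
        ((t = 1 ∨ t = 2) → xseq t ∈ OutH G xseq 1)) ∧
    (∀ t, xseq t ∈ h1p ∨ ∃ s, 1 ≤ s ∧ s ≤ t ∧ xseq t ∈ OutH G xseq s) ∧
    (∀ t, xseq t ∈ h2p ∨ ∃ s, 1 ≤ s ∧ s ≤ t ∧ xseq t ∈ OutH G xseq s) ∧
    (∀ y ∈ h1p, ∃ t, xseq t = y) ∧
    (∀ y ∈ h2p, ∃ t, xseq t = y) := by
  refine ⟨fun t => ⟨?_, ?_⟩, xseq_mem_or_replayed hfirst nonneg_subset_h1p,
    xseq_mem_or_replayed hfirst nonneg_subset_h2p,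
    fun _ => exists_xseq_eq_of_mem_h1p, fun _ => exists_xseq_eq_of_mem_h2p⟩
  · rintro ⟨h1, h2⟩
    have hx := xseq_nonneg h1 h2
    exact ⟨nonneg_subset_h1p hx, nonneg_subset_h2p hx⟩
  · intro ht
    exact xseq_mem_OutH_one hfirst (by omega)
end

section
/- Per-round termination of the Witness Protection generator: fix a time t and suppose the active set V_t = {i ≤ t : S_t ⊆ supp(h_i)} is nonempty. Then (a) the minimal index in V_t is (t,m)-critical with replay for every m; (b) for fixed t, the predicate 'h_i is (t,m)-critical with replay' is antitone in m (once false at m' it stays false for all m ≥ m'), so the largest critical index n^{(t,m)} stabilizes to some value n̄ for all large m; and (c) since the excluded set S_t ∪ O_{t−1} ∪ W^{(t,m)} has cardinality at most 2t + t², and supp(h_{n̄}) is infinite, for all sufficiently large m the set supp(h_{n̄}) ∩ {1,...,m} minus the excluded set is nonempty. -/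
/-!
The least active index is critical for every `m`, since no earlier index is active and the
replay condition is vacuous. Lowering `m` only truncates the supports further, so criticality
is antitone in `m`; hence the largest critical index `≤ t` is an antitone `ℕ`-valued function
of `m` and is eventually constant, equal to some `n̄`. The excluded sets have at most
`t + t + t(t-1)/2` elements uniformly in `m`, so among any `t + t + t(t-1)/2 + 1` points of the
infinite set `supp(h_n̄)` one survives, and it lies below `m` once `m` exceeds all of them.
-/

/-- h_n is (t,m)-critical with replay (relative to the sure set `S` and the past
outputs `O`): `S ⊆ supp(h_n)`, and for every earlier consistent index `i < n`,
`supp(h_n)[m] ⊆ supp(h_i)[m] ∪ O`, where `supp(h)[m] = supp(h) ∩ {1,...,m}`. -/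
def Critical (hyp : ℕ → Set ℕ) (S O : Set ℕ) (n m : ℕ) : Prop :=
  S ⊆ hyp n ∧ ∀ i < n, S ⊆ hyp i → hyp n ∩ Set.Iic m ⊆ (hyp i ∩ Set.Iic m) ∪ O

section Critical

variable {hyp : ℕ → Set ℕ} {S O : Set ℕ}

theorem critical_of_forall_lt_not_subset {n : ℕ} (hn : S ⊆ hyp n)
    (hmin : ∀ i < n, ¬S ⊆ hyp i) (m : ℕ) : Critical hyp S O n m :=
  ⟨hn, fun i hi hSi => absurd hSi (hmin i hi)⟩

theorem Critical.of_le {n m m' : ℕ} (hm : m ≤ m') (h : Critical hyp S O n m') :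
    Critical hyp S O n m := by
  refine ⟨h.1, fun i hi hSi x hx => ?_⟩
  rcases h.2 i hi hSi ⟨hx.1, hx.2.trans hm⟩ with hxi | hxO
  · exact Or.inl ⟨hxi.1, hx.2⟩
  · exact Or.inr hxO

theorem antitone_sSup_critical (t : ℕ) :
    Antitone fun m => sSup {n | n ≤ t ∧ Critical hyp S O n m} :=
  fun _ _ hm => csSup_le_csSup' ⟨t, fun _ hn => hn.1⟩ fun _ hn => ⟨hn.1, hn.2.of_le hm⟩

end Critical

theorem Set.Infinite.exists_forall_inter_Iic_diff_nonempty {s : Set ℕ} (hs : s.Infinite)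
    (k : ℕ) :
    ∃ m₁, ∀ m, m₁ ≤ m → ∀ E : Finset ℕ, E.card ≤ k → ((s ∩ Set.Iic m) \ E).Nonempty := by
  obtain ⟨F, hFs, hF⟩ := hs.exists_subset_card_eq (k + 1)
  refine ⟨F.sup id, fun m hm E hE => ?_⟩
  obtain ⟨x, hxF, hxE⟩ := Finset.exists_mem_notMem_of_card_lt_card (s := E) (t := F) (by omega)
  exact ⟨x, ⟨hFs hxF, (Finset.le_sup (f := id) hxF).trans hm⟩, hxE⟩

/-- Per-round termination of the Witness Protection generator:
(a) the minimal index of the nonempty active set V_t is (t,m)-critical for every m;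
(b) criticality is antitone in m, so the largest critical index stabilizes to some n̄;
(c) since the excluded set S_t ∪ O_{t−1} ∪ W^{(t,m)} is uniformly finite and
supp(h_n̄) is infinite, for all sufficiently large m there is an admissible output. -/
theorem statement12 (hyp : ℕ → Set ℕ) (t : ℕ) (S O : Finset ℕ) (W : ℕ → Finset ℕ)
    (hS : S.card ≤ t) (hO : O.card ≤ t) (hW : ∀ m, (W m).card ≤ t * (t - 1) / 2)
    (hinf : ∀ i, (hyp i).Infinite)
    (hVne : {i | i ≤ t ∧ (S : Set ℕ) ⊆ hyp i}.Nonempty) :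
    (∀ m, Critical hyp ↑S ↑O (sInf {i | i ≤ t ∧ (S : Set ℕ) ⊆ hyp i}) m) ∧
    (∀ n m m', m ≤ m' → Critical hyp ↑S ↑O n m' → Critical hyp ↑S ↑O n m) ∧
    (∃ m0 nbar, (∀ m, m0 ≤ m → sSup {n | n ≤ t ∧ Critical hyp ↑S ↑O n m} = nbar) ∧
      ∃ m1, ∀ m, m1 ≤ m →
        ((hyp nbar ∩ Set.Iic m) \ ↑(S ∪ O ∪ W m)).Nonempty) := by
  have hmin := Nat.sInf_mem hVne
  have hcrit_min : ∀ m, Critical hyp S O (sInf {i | i ≤ t ∧ (S : Set ℕ) ⊆ hyp i}) m :=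
    critical_of_forall_lt_not_subset hmin.2 fun i hi hSi =>
      Nat.notMem_of_lt_sInf hi ⟨hi.le.trans hmin.1, hSi⟩
  obtain ⟨m₀, hm₀⟩ := WellFoundedLT.antitone_chain_condition
    (antitone_sSup_critical (hyp := hyp) (S := S) (O := O) t)
  obtain ⟨m₁, hm₁⟩ :=
    (hinf (sSup {n | n ≤ t ∧ Critical hyp S O n m₀})).exists_forall_inter_Iic_diff_nonempty
      (t + t + t * (t - 1) / 2)
  refine ⟨hcrit_min, fun n m m' hm h => h.of_le hm,
    m₀, _, fun m hm => (hm₀ m hm).symm, m₁, fun m hm => hm₁ m hm _ ?_⟩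
  calc (S ∪ O ∪ W m).card ≤ (S ∪ O).card + (W m).card := Finset.card_union_le _ _
    _ ≤ S.card + O.card + (W m).card := by gcongr; exact Finset.card_union_le _ _
    _ ≤ t + t + t * (t - 1) / 2 := by gcongr; exact hW m
end

section
/- Eventual validity in the Witness Protection algorithm: suppose at time t the target's index z satisfies that h_z is (t,m)-critical with replay, the algorithm outputs o_t ∈ supp(h_{n})[m] \ (S_t ∪ O_{t−1} ∪ W^{(t,m)}) where n = n^{(t,m)} ≥ z is the largest (t,m)-critical index. Then o_t ∈ supp(h_z) \ {x_1,...,x_t}: if n = z this is immediate; if n > z, criticality of h_n applied with i = z gives supp(h_n)[m] ⊆ supp(h_z)[m] ∪ O_{t−1}, and since o_t ∉ O_{t−1}, o_t ∈ supp(h_z); freshness follows since every revealed example lies in S_t ∪ O_{t−1}. -/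
/-- Eventual validity step of Witness Protection: if both the target index `z` and
the selected index `n ≥ z` are (t,m)-critical, and the output `o` lies in
supp(h_n)[m] \ (S_t ∪ O_{t−1} ∪ W), while every revealed example lies in
S_t ∪ O_{t−1}, then `o ∈ supp(h_z) \ {x_1,...,x_t}`. -/
theorem statement13 (hyp : ℕ → Set ℕ) (S O W : Set ℕ) (z n t m : ℕ)
    (x : ℕ → ℕ) (o : ℕ)
    (hcz : Critical hyp S O z m) (hcn : Critical hyp S O n m) (hzn : z ≤ n)
    (ho : o ∈ (hyp n ∩ Set.Iic m) \ (S ∪ O ∪ W))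
    (hx : ∀ s ≤ t, x s ∈ S ∪ O) :
    o ∈ hyp z ∧ ∀ s ≤ t, o ≠ x s := by
  obtain ⟨hom, hno⟩ := ho
  have hoS : o ∉ S := fun h => hno (Or.inl (Or.inl h))
  have hoO : o ∉ O := fun h => hno (Or.inl (Or.inr h))
  have hz : o ∈ hyp z := by
    rcases eq_or_lt_of_le hzn with h | h
    · exact h ▸ hom.1
    · rcases hcn.2 z h hcz.1 hom with h' | h'
      · exact h'.1
      · exact absurd h' hoO
  refine ⟨hz, fun s hs heq => ?_⟩
  rcases hx s hs with h | h
  · exact hoS (heq ▸ h)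
  · exact hoO (heq ▸ h)
end

section
/- Every countable binary hypothesis class H = {h_1, h_2, ...} over a countable domain, with every supp(h_i) infinite, is generatable in the limit with replay: there exists a generator G such that for every h* ∈ H and every infinite sequence (x_t) in which each x_t lies in supp(h*) or equals an earlier output of G, and which eventually contains every element of supp(h*), there is a finite t* with G(x_1,...,x_s) ∈ supp(h*) \ {x_1,...,x_s} for all s ≥ t*. -/
/-!
The generator keeps a *level* `g` and outputs a fresh element of the intersection of all
hypotheses `hyp j`, `j < g`, that are currently *qualified*, taking `g` as large as possible.
A hypothesis is qualified when it explains every stream element except replays of earlier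
outputs, and when it is *covered*: the first `n` of its elements (in a fixed enumeration of `X`)
have appeared, where `n` counts the past rounds whose level was `≤ j`.

The level tends to infinity on every stream. Otherwise it equals some `k` infinitely often while
being eventually `≥ k`; the qualification of every `j < k` then stabilises, so the candidates of
level `k` are eventually a fixed set `J`. Each return to level `k` raises the coverage demand on
`hyp k`, so all of `hyp k` is eventually seen, and everything ever seen lies in `J` up to finitely
many early outputs; since level `k + 1` is refused, `J ∩ hyp k` is contained in a finite seen set,
so `hyp k` is finite. For the target `hyp i`, once the level stays above `i` its coverage demand
is frozen, so `hyp i` is eventually qualified and every output lies in it.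
-/

open Set Filter

theorem eventuallyConst_of_persistent {P : ℕ → Prop} {T : ℕ}
    (h : ∀ t t', T ≤ t → t ≤ t' → P t → P t') : EventuallyConst P atTop := by
  rw [eventuallyConst_pred]
  by_cases hP : ∃ t ≥ T, P t
  · obtain ⟨t, hTt, ht⟩ := hP
    exact Or.inl ((eventually_ge_atTop t).mono fun t' htt' => h t t' hTt htt' ht)
  · push Not at hP
    exact Or.inr ((eventually_ge_atTop T).mono hP)

theorem eventually_iff_of_eventuallyConst {P : ℕ → Prop} (h : EventuallyConst P atTop) :
    ∀ᶠ t in atTop, P t ↔ ∀ᶠ s in atTop, P s := by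
  rcases eventuallyConst_pred.mp h with h | h
  · exact h.mono fun _ ht => iff_of_true ht h
  · refine h.mono fun _ ht => iff_of_false ht fun hP => ?_
    obtain ⟨_, hs, hns⟩ := (hP.and h).exists
    exact hns hs

namespace LimitGeneration

variable {X : Type*}

section Step

variable (hyp : ℕ → Set X) (e : ℕ → X) (x : ℕ → X) (p : ℕ → ℕ × X) (t : ℕ)

/- `x` is the stream and `p s = (level, output)` the history of the generator; the output
`(p s).2` is made after reading `x 0, …, x (s - 1)`, so `∃ s ≤ r` in `Consistent` admits exactly
the replays of outputs made before `x r`. Everything at time `t` reads `x`, `p` only below `t`. -/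

def seen : Set X := x '' Iio t ∪ (fun s => (p s).2) '' Iio t

def Consistent (j : ℕ) : Prop := ∀ r < t, x r ∈ hyp j ∨ ∃ s ≤ r, x r = (p s).2

def demand (j : ℕ) : ℕ := Nat.count (fun s => (p s).1 ≤ j) t

def Covered (j : ℕ) : Prop := ∀ m < demand p t j, e m ∈ hyp j → e m ∈ seen x p t

def Qualified (j : ℕ) : Prop := Consistent hyp x p t j ∧ Covered hyp e x p t j

def candidates (g : ℕ) : Set X := {a | ∀ j < g, Qualified hyp e x p t j → a ∈ hyp j}

def Admissible (g : ℕ) : Prop := (candidates hyp e x p t g \ seen x p t).Nonempty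

open Classical in
noncomputable def level : ℕ := Nat.findGreatest (Admissible hyp e x p t) t

noncomputable def step [Nonempty X] : ℕ × X :=
  (level hyp e x p t,
    Classical.epsilon (· ∈ candidates hyp e x p t (level hyp e x p t) \ seen x p t))

def IsRun [Nonempty X] : Prop := ∀ t, p t = step hyp e x p t

end Step

section Congr

variable {hyp : ℕ → Set X} {e : ℕ → X} {x x' : ℕ → X} {p p' : ℕ → ℕ × X}
  {t : ℕ}

theorem seen_congr (hx : EqOn x x' (Iio t)) (hp : EqOn p p' (Iio t)) :
    seen x p t = seen x' p' t := by
  have hout : EqOn (fun s => (p s).2) (fun s => (p' s).2) (Iio t) :=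
    fun s hs => congrArg Prod.snd (hp hs)
  rw [seen, seen, hx.image_eq, hout.image_eq]

theorem demand_congr (hp : EqOn p p' (Iio t)) : demand p t = demand p' t :=
  funext fun _ => le_antisymm (Nat.count_mono_left fun _ hs h => hp hs ▸ h)
    (Nat.count_mono_left fun _ hs h => (hp hs).symm ▸ h)

theorem consistent_congr (hx : EqOn x x' (Iio t)) (hp : EqOn p p' (Iio t)) :
    Consistent hyp x p t = Consistent hyp x' p' t := by
  ext j
  refine forall₂_congr fun r hr => ?_
  rw [hx hr]
  exact or_congr_right <| exists_congr fun s => and_congr_right fun hs => by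
    rw [hp (lt_of_le_of_lt hs hr)]

theorem step_congr [Nonempty X] (hx : EqOn x x' (Iio t)) (hp : EqOn p p' (Iio t)) :
    step hyp e x p t = step hyp e x' p' t := by
  have hqual : Qualified hyp e x p t = Qualified hyp e x' p' t := by
    ext j
    rw [Qualified, Qualified, Covered, Covered, consistent_congr hx hp, demand_congr hp,
      seen_congr hx hp]
  unfold step level Admissible candidates
  rw [hqual, seen_congr hx hp]

end Congr

section Generator

variable (hyp : ℕ → Set X) (e : ℕ → X) [Nonempty X]

/- The generator recomputes its own history from the prefixes of its input; the fallback values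
are never read. -/
noncomputable def run (L : List X) : ℕ × X :=
  step hyp e (fun r => L.getD r (Classical.arbitrary X))
    (fun s => if s < L.length then run (L.take s) else Classical.arbitrary _) L.length
termination_by L.length
decreasing_by simp_all

noncomputable def generator (L : List X) : X := (run hyp e L).2

theorem isRun_run_prefix (x : ℕ → X) :
    IsRun hyp e x fun t => run hyp e ((List.range t).map x) := by
  intro t
  dsimp only
  rw [run, List.length_map, List.length_range]
  apply step_congr
  · intro r hr
    simp_all
  · intro s (hs : s < t)
    dsimp only
    rw [if_pos hs, ← List.map_take, List.take_range, min_eq_left hs.le]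

end Generator

section Basic

variable {hyp : ℕ → Set X} {e : ℕ → X} {x : ℕ → X} {p : ℕ → ℕ × X}

theorem seen_mono : Monotone (seen x p) := fun _ _ h =>
  union_subset_union (image_mono (Iio_subset_Iio h)) (image_mono (Iio_subset_Iio h))

theorem seen_finite (x : ℕ → X) (p : ℕ → ℕ × X) (t : ℕ) : (seen x p t).Finite :=
  ((finite_Iio t).image _).union ((finite_Iio t).image _)

theorem Consistent.anti {t t' j : ℕ} (h : Consistent hyp x p t' j) (ht : t ≤ t') :
    Consistent hyp x p t j :=
  fun r hr => h r (lt_of_lt_of_le hr ht)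

theorem Covered.of_le {t t' j : ℕ} (h : Covered hyp e x p t j) (ht : t ≤ t')
    (hd : demand p t' j ≤ demand p t j) : Covered hyp e x p t' j :=
  fun m hm hme => seen_mono ht (h m (lt_of_lt_of_le hm hd) hme)

theorem mem_candidates_succ {t k : ℕ} {a : X} :
    a ∈ candidates hyp e x p t (k + 1) ↔
      a ∈ candidates hyp e x p t k ∧ (Qualified hyp e x p t k → a ∈ hyp k) := by
  simp only [candidates, mem_ofPred_eq, Nat.lt_succ_iff_lt_or_eq, or_imp, forall_and,
    forall_eq]

theorem candidates_anti {t g g' : ℕ} (h : g ≤ g') :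
    candidates hyp e x p t g' ⊆ candidates hyp e x p t g :=
  fun _ ha j hj => ha j (lt_of_lt_of_le hj h)

theorem admissible_zero [Infinite X] (t : ℕ) : Admissible hyp e x p t 0 := by
  simpa [Admissible, candidates, ← compl_eq_univ_sdiff] using
    (seen_finite x p t).infinite_compl.nonempty

end Basic

section Stabilisation

variable {hyp : ℕ → Set X} {e : ℕ → X} {x : ℕ → X} {p : ℕ → ℕ × X} {j : ℕ}

theorem eventuallyConst_demand (h : ∀ᶠ s in atTop, j < (p s).1) :
    EventuallyConst (fun t => demand p t j) atTop := by
  obtain ⟨T, hT⟩ := eventually_atTop.mp h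
  refine eventuallyConst_atTop.mpr ⟨T, fun t ht => ?_⟩
  refine le_antisymm ?_ (Nat.count_monotone _ ht)
  by_contra! hlt
  obtain ⟨s, hs, hle⟩ := Nat.exists_of_count_lt_count hlt
  exact (hT s hs.1).not_ge hle

theorem tendsto_demand (h : ∃ᶠ s in atTop, (p s).1 ≤ j) :
    Tendsto (fun t => demand p t j) atTop atTop := by
  refine tendsto_atTop.mpr fun N => ?_
  induction N with
  | zero => exact Eventually.of_forall fun _ => Nat.zero_le _
  | succ N ih =>
    obtain ⟨s, hs, hsN⟩ := (h.and_eventually ih).exists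
    exact (eventually_gt_atTop s).mono fun t hst =>
      lt_of_le_of_lt hsN (Nat.count_strict_mono hs hst)

theorem eventuallyConst_qualified (h : ∀ᶠ s in atTop, j < (p s).1) :
    EventuallyConst (fun t => Qualified hyp e x p t j) atTop := by
  have hcons : EventuallyConst (fun t => Consistent hyp x p t j) atTop := by
    have := eventuallyConst_of_persistent (P := fun t => ¬Consistent hyp x p t j) (T := 0)
      fun _ _ _ htt' hn hc => hn (hc.anti htt')
    simpa [Function.comp_def] using this.comp Not
  obtain ⟨T, hT⟩ := eventuallyConst_atTop.mp (eventuallyConst_demand h)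
  have hcov : EventuallyConst (fun t => Covered hyp e x p t j) atTop :=
    eventuallyConst_of_persistent (T := T) fun t t' hTt htt' hc =>
      hc.of_le htt' (by rw [hT t hTt, hT t' (hTt.trans htt')])
  exact hcons.comp₂ (· ∧ ·) hcov

theorem exists_qualified_stable {k : ℕ} (hk : ∀ᶠ t in atTop, k ≤ (p t).1) :
    ∃ T, ∀ t ≥ T, k ≤ (p t).1 ∧
      ∀ j < k, (Qualified hyp e x p t j ↔ Qualified hyp e x p T j) := by
  have hlim : ∀ᶠ t in atTop, ∀ j ∈ Iio k,
      (Qualified hyp e x p t j ↔ ∀ᶠ s in atTop, Qualified hyp e x p s j) :=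
    (eventually_all_finite (finite_Iio k)).mpr fun j hj =>
      eventually_iff_of_eventuallyConst (eventuallyConst_qualified (hk.mono fun _ => hj.trans_le))
  obtain ⟨T, hT⟩ := eventually_atTop.mp (hk.and hlim)
  exact ⟨T, fun t ht => ⟨(hT t ht).1, fun j hj =>
    ((hT t ht).2 j hj).trans ((hT T le_rfl).2 j hj).symm⟩⟩

theorem eventually_qualified {i : ℕ} (hlevel : ∀ᶠ t in atTop, i < (p t).1)
    (hcons : ∀ t, Consistent hyp x p t i) (henum : ∀ a ∈ hyp i, ∃ r, x r = a) :
    ∀ᶠ t in atTop, Qualified hyp e x p t i := by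
  obtain ⟨B, hB⟩ := (eventuallyConst_demand hlevel).eventuallyEq_const
  have hseen : ∀ᶠ t in atTop, ∀ m ∈ Iio B, e m ∈ hyp i → e m ∈ seen x p t := by
    refine (eventually_all_finite (finite_Iio B)).mpr fun m _ => ?_
    by_cases hm : e m ∈ hyp i
    · obtain ⟨r, hr⟩ := henum _ hm
      exact (eventually_gt_atTop r).mono fun t hrt _ => Or.inl ⟨r, hrt, hr⟩
    · exact Eventually.of_forall fun _ h => absurd h hm
  filter_upwards [hB, hseen] with t hBt ht
  exact ⟨hcons t, fun m hm => ht m (hBt ▸ hm)⟩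

end Stabilisation

section Run

variable {hyp : ℕ → Set X} {e : ℕ → X} {x : ℕ → X} {p : ℕ → ℕ × X} [Infinite X]

open Classical

theorem IsRun.fst_eq (hrun : IsRun hyp e x p) (t : ℕ) : (p t).1 = level hyp e x p t :=
  congrArg Prod.fst (hrun t)

theorem IsRun.admissible_fst (hrun : IsRun hyp e x p) (t : ℕ) :
    Admissible hyp e x p t (p t).1 := by
  rw [hrun.fst_eq]
  exact Nat.findGreatest_spec (Nat.zero_le t) (admissible_zero t)

theorem IsRun.le_fst (hrun : IsRun hyp e x p) {t g : ℕ} (hg : g ≤ t)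
    (h : Admissible hyp e x p t g) : g ≤ (p t).1 := by
  rw [hrun.fst_eq]
  exact Nat.le_findGreatest hg h

theorem IsRun.snd_mem (hrun : IsRun hyp e x p) (t : ℕ) :
    (p t).2 ∈ candidates hyp e x p t (p t).1 \ seen x p t := by
  have h := hrun.admissible_fst t
  rw [hrun.fst_eq] at h
  rw [hrun t]
  exact Classical.epsilon_spec h

theorem IsRun.qualified_of_fst_eq (hrun : IsRun hyp e x p) {t k : ℕ} (hkt : k < t)
    (hk : (p t).1 = k) : Qualified hyp e x p t k := by
  by_contra hq
  have hcand : candidates hyp e x p t (k + 1) = candidates hyp e x p t k :=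
    ext fun a => by simp [mem_candidates_succ, hq]
  have hadm := hrun.admissible_fst t
  rw [hk, Admissible, ← hcand] at hadm
  have := hrun.le_fst hkt hadm
  omega

theorem IsRun.seen_subset (hrun : IsRun hyp e x p) {T k : ℕ}
    (hT : ∀ t ≥ T, k ≤ (p t).1 ∧
      ∀ j < k, (Qualified hyp e x p t j ↔ Qualified hyp e x p T j))
    (t : ℕ) : seen x p t ⊆ candidates hyp e x p T k ∪ (fun s => (p s).2) '' Iio T := by
  have hout : ∀ s, (p s).2 ∈ candidates hyp e x p T k ∪ (fun s => (p s).2) '' Iio T := by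
    intro s
    rcases lt_or_ge s T with hs | hs
    · exact Or.inr ⟨s, hs, rfl⟩
    · exact Or.inl fun j hj hq =>
        candidates_anti (hT s hs).1 (hrun.snd_mem s).1 j hj (((hT s hs).2 j hj).mpr hq)
  rintro a (⟨r, -, rfl⟩ | ⟨s, -, rfl⟩)
  · by_cases hreplay : ∃ s ≤ r, x r = (p s).2
    · obtain ⟨s, -, hs⟩ := hreplay
      exact hs ▸ hout s
    · refine Or.inl fun j hj hq => ?_
      have hcons := (((hT (max T (r + 1)) (le_max_left _ _)).2 j hj).mpr hq).1
      exact (hcons r (lt_of_lt_of_le r.lt_succ_self (le_max_right _ _))).resolve_right hreplay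
  · exact hout s

theorem IsRun.exists_mem_seen (hrun : IsRun hyp e x p) (he : Function.Surjective e)
    {k : ℕ} (hpin : ∃ᶠ t in atTop, (p t).1 = k) {a : X} (ha : a ∈ hyp k) :
    ∃ t, a ∈ seen x p t := by
  obtain ⟨m, rfl⟩ := he a
  have hdemand := (tendsto_demand (hpin.mono fun _ ht => ht.le)).eventually_gt_atTop m
  obtain ⟨t, ⟨hpt, hkt⟩, hmt⟩ :=
    ((hpin.and_eventually (eventually_gt_atTop k)).and_eventually hdemand).exists
  exact ⟨t, (hrun.qualified_of_fst_eq hkt hpt).2 m hmt ha⟩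

theorem IsRun.finite_of_frequently_fst_eq (hrun : IsRun hyp e x p) (he : Function.Surjective e)
    {k : ℕ} (hk : ∀ᶠ t in atTop, k ≤ (p t).1) (hpin : ∃ᶠ t in atTop, (p t).1 = k) :
    (hyp k).Finite := by
  obtain ⟨T, hT⟩ := exists_qualified_stable (hyp := hyp) (e := e) (x := x) hk
  obtain ⟨t₀, ⟨hpt₀, hkt₀⟩, hTt₀⟩ :=
    ((hpin.and_eventually (eventually_gt_atTop k)).and_eventually (eventually_ge_atTop T)).exists
  have hrefused : candidates hyp e x p t₀ (k + 1) ⊆ seen x p t₀ := by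
    have hnot : ¬Admissible hyp e x p t₀ (k + 1) := fun h => by
      have := hrun.le_fst hkt₀ h
      omega
    exact sdiff_eq_empty.mp (not_nonempty_iff_eq_empty.mp hnot)
  have hcover : hyp k ⊆ seen x p t₀ ∪ (fun s => (p s).2) '' Iio T := by
    intro a ha
    obtain ⟨t, hat⟩ := hrun.exists_mem_seen he hpin ha
    rcases hrun.seen_subset hT t hat with haJ | haF
    · refine Or.inl (hrefused (mem_candidates_succ.mpr ⟨fun j hj hq => ?_, fun _ => ha⟩))
      exact haJ j hj (((hT t₀ hTt₀).2 j hj).mp hq)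
    · exact Or.inr haF
  exact ((seen_finite x p t₀).union ((finite_Iio T).image _)).subset hcover

theorem IsRun.tendsto_fst (hrun : IsRun hyp e x p) (he : Function.Surjective e)
    (hinf : ∀ k, (hyp k).Infinite) : Tendsto (fun t => (p t).1) atTop atTop := by
  refine tendsto_atTop.mpr fun k => ?_
  induction k with
  | zero => exact Eventually.of_forall fun _ => Nat.zero_le _
  | succ k ih =>
    by_contra hk
    have hpin : ∃ᶠ t in atTop, (p t).1 = k :=
      ((not_eventually.mp hk).and_eventually ih).mono fun _ h => by omega
    exact hinf k (hrun.finite_of_frequently_fst_eq he ih hpin)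

end Run

end LimitGeneration

/-- Every countable class H = {h_1, h_2, ...} over a countable domain, with every
support infinite, is generatable in the limit with replay: there is a generator G
such that for every target h* ∈ H and every enumeration with replay for h* and G,
eventually all outputs of G are fresh elements of supp(h*). -/
theorem statement14 {X : Type*} [Countable X] (hyp : ℕ → Set X)
    (hUUS : ∀ i, (hyp i).Infinite) :
    ∃ G : List X → X, ∀ i : ℕ, ∀ x : ℕ → X,
      ReplaySeq (hyp i) G x → (∀ y ∈ hyp i, ∃ t, x t = y) →
      ∃ tstar : ℕ, ∀ s, tstar ≤ s →
        Out G x s ∈ hyp i ∧ ∀ r < s, Out G x s ≠ x r := by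
  have : Infinite X := Set.infinite_univ_iff.mp ((hUUS 0).mono (Set.subset_univ _))
  obtain ⟨e, he⟩ := exists_surjective_nat X
  refine ⟨LimitGeneration.generator hyp e, fun i x hreplay henum => ?_⟩
  have hrun := LimitGeneration.isRun_run_prefix hyp e x
  have hcons : ∀ t, LimitGeneration.Consistent hyp x _ t i := fun _ r _ =>
    (hreplay r).imp_right fun ⟨s, _, hsr, hs⟩ => ⟨s, hsr, hs⟩
  have hlevel := (hrun.tendsto_fst he hUUS).eventually_gt_atTop i
  obtain ⟨T, hT⟩ := Filter.eventually_atTop.mp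
    (hlevel.and (LimitGeneration.eventually_qualified hlevel hcons henum))
  refine ⟨T, fun s hs => ?_⟩
  obtain ⟨hmem, hfresh⟩ := hrun.snd_mem s
  exact ⟨hmem i (hT s hs).1 (hT s hs).2, fun r hr hsr => hfresh (Or.inl ⟨r, hr, hsr.symm⟩)⟩
end

section
/- There is no deterministic proper generator, making only membership queries (oracle access to the predicate 'x ∈ supp(h)'), that properly generates in the limit every countable hypothesis class over ℕ with all supports infinite. Formally: for every such generator G one can construct a countable class H = {h_1, h_2, ...} with each supp(h_i) ⊆ ℕ infinite and membership decidable, a target h* ∈ H, and an enumeration (x_t) of supp(h*) on which G outputs hypotheses ĥ_t with supp(ĥ_t) ⊄ supp(h*) at infinitely many times t. -/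
/-!
Diagonalise against `G` by building the class in stages. Row `0`, the tracker, always
consists of the even numbers, the marks fed so far and one unfed mark `m`; the candidate row
`c` consists of the even numbers and the fed marks; every other row owns an element `≡ 1 mod 4`,
while all marks are `≡ 3 mod 4`. The example sequence lists `t` at even times `t` and the last
fed mark at odd times. When `G` outputs `c` at an even stage, `c` gets the junk element
`4N + 1`, the mark `m` is fed, the tracker gets the new mark `4N + 3`, and a fresh row, a copy
of the tracker, becomes the candidate. Every change lies above `N`, which exceeds all oracle
values `G` looked at so far, so the limit oracle gives the same answers and `G` behaves on it
exactly as during the construction.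

If `G` outputs the candidate infinitely often, the target is the tracker, which contains
every mark and no junk. Otherwise the target is the final candidate `c`: from some stage on
`G` outputs rows `g ≠ c` at all even stages, and each such row has an odd element missing
from `c` (the unfed mark if `g` is the tracker, an element `≡ 1 mod 4` otherwise).
-/

namespace MembershipQueryDiagonal

section StableLimit

variable {α β : Type*} {o : ℕ → α → β} {size : α → ℕ} {N : ℕ → ℕ}

def stableLimit (o : ℕ → α → β) (size : α → ℕ) (p : α) : β := o (size p + 1) p

theorem eq_of_le_of_size_lt (hN : Monotone N)
    (hstep : ∀ t p, size p < N t → o (t + 1) p = o t p) {t u : ℕ} (htu : t ≤ u) {p : α}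
    (hp : size p < N t) : o u p = o t p := by
  induction u, htu using Nat.le_induction with
  | base => rfl
  | succ u htu ih => rw [hstep u p (hp.trans_le (hN htu)), ih]

theorem stableLimit_eq (hN : Monotone N) (hle : ∀ t, t ≤ N t)
    (hstep : ∀ t p, size p < N t → o (t + 1) p = o t p) {t : ℕ} {p : α}
    (hp : size p < N t) : stableLimit o size p = o t p := by
  rcases le_total (size p + 1) t with h | h
  · exact (eq_of_le_of_size_lt hN hstep h ((Nat.lt_succ_self _).trans_le (hle _))).symm
  · exact eq_of_le_of_size_lt hN hstep h hp

end StableLimit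

def QueriesFinitely (G : List ℕ → (ℕ × ℕ → Bool) → ℕ) : Prop :=
  ∀ l F, ∃ Qs : Finset (ℕ × ℕ), ∀ F' : ℕ × ℕ → Bool, (∀ q ∈ Qs, F' q = F q) → G l F' = G l F

namespace QueriesFinitely

variable {G : List ℕ → (ℕ × ℕ → Bool) → ℕ}

noncomputable def useBound (hG : QueriesFinitely G) (l : List ℕ) (F : ℕ × ℕ → Bool) : ℕ :=
  (Classical.choose (hG l F)).sup fun q => q.1 + q.2

theorem apply_eq_of_agree (hG : QueriesFinitely G) {l : List ℕ} {F F' : ℕ × ℕ → Bool}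
    (h : ∀ q : ℕ × ℕ, q.1 + q.2 ≤ hG.useBound l F → F' q = F q) : G l F' = G l F :=
  Classical.choose_spec (hG l F) F' fun q hq => h q (Finset.le_sup (f := fun q => q.1 + q.2) hq)

end QueriesFinitely

def row (F : ℕ × ℕ → Bool) (i : ℕ) : Set ℕ := {j | F (i, j) = true}

structure Config where
  oracle : ℕ × ℕ → Bool
  cand : ℕ
  mark : ℕ
  fed : Set ℕ
  lastFed : ℕ

namespace Config

structure Inv (κ : Config) : Prop where
  even_mem : ∀ i j, j % 2 = 0 → κ.oracle (i, j) = true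
  cand_row : ∀ j, κ.oracle (κ.cand, j) = true ↔ j % 2 = 0 ∨ j ∈ κ.fed
  tracker_row : ∀ j, κ.oracle (0, j) = true ↔ j % 2 = 0 ∨ j ∈ κ.fed ∨ j = κ.mark
  cand_ne_zero : κ.cand ≠ 0
  exists_mod_four_eq_one : ∀ i, i ≠ κ.cand → i ≠ 0 → ∃ j, j % 4 = 1 ∧ κ.oracle (i, j) = true
  fed_mod_four : ∀ f ∈ κ.fed, f % 4 = 3
  fed_lt_mark : ∀ f ∈ κ.fed, f < κ.mark
  mark_mod_four : κ.mark % 4 = 3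
  lastFed_mem : κ.lastFed % 2 = 0 ∨ κ.lastFed ∈ κ.fed

def init : Config where
  oracle p := decide (p.2 % 2 = 0 ∨ (p.1 = 0 ∧ p.2 = 3) ∨ (2 ≤ p.1 ∧ p.2 = 4 * p.1 + 1))
  cand := 1
  mark := 3
  fed := ∅
  lastFed := 0

theorem inv_init : init.Inv where
  even_mem i j hj := by simp [init, hj]
  cand_row j := by simp [init]
  tracker_row j := by simp [init]
  cand_ne_zero := one_ne_zero
  exists_mod_four_eq_one i hi _ := ⟨4 * i + 1, by omega, by simp [init] at hi ⊢; omega⟩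
  fed_mod_four := by simp [init]
  fed_lt_mark := by simp [init]
  mark_mod_four := rfl
  lastFed_mem := Or.inl rfl

def promote (κ : Config) (N : ℕ) : Config where
  oracle p := if p.1 = N + 1 then κ.oracle (0, p.2)
    else κ.oracle p || decide (p = (κ.cand, 4 * N + 1) ∨ p = (0, 4 * N + 3))
  cand := N + 1
  mark := 4 * N + 3
  fed := insert κ.mark κ.fed
  lastFed := κ.mark

variable {κ : Config} {N : ℕ}

theorem promote_oracle_of_lt {p : ℕ × ℕ} (hp : p.1 + p.2 < N) :
    (κ.promote N).oracle p = κ.oracle p := by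
  obtain ⟨i, j⟩ := p
  simp only [promote, Prod.mk.injEq]
  rw [if_neg (by omega)]
  simp only [Bool.or_eq_left_iff_imp, decide_eq_true_eq]
  omega

theorem promote_oracle_cand (hc : κ.cand < N) :
    (κ.promote N).oracle (κ.cand, 4 * N + 1) = true := by
  simp [promote, show κ.cand ≠ N + 1 by omega]

theorem Inv.promote (h : κ.Inv) (hm : κ.mark < N) (hc : κ.cand < N) : (κ.promote N).Inv where
  even_mem i j hj := by
    simp only [Config.promote]
    split_ifs
    · exact h.even_mem 0 j hj
    · simp [h.even_mem i j hj]
  cand_row j := by simp [Config.promote, h.tracker_row]; tauto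
  tracker_row j := by simp [Config.promote, h.tracker_row, h.cand_ne_zero.symm]; tauto
  cand_ne_zero := N.succ_ne_zero
  exists_mod_four_eq_one i hi hi0 := by
    have hi' : i ≠ N + 1 := hi
    by_cases hic : i = κ.cand
    · exact ⟨4 * N + 1, by omega, by simp [Config.promote, hic, show κ.cand ≠ N + 1 by omega]⟩
    · obtain ⟨j, hj, hij⟩ := h.exists_mod_four_eq_one i hic hi0
      exact ⟨j, hj, by simp [Config.promote, hi', hij]⟩
  fed_mod_four f hf := by
    obtain rfl | hf := hf
    · exact h.mark_mod_four
    · exact h.fed_mod_four f hf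
  fed_lt_mark f hf := by
    show f < 4 * N + 3
    obtain rfl | hf := hf
    · omega
    · have := h.fed_lt_mark f hf
      omega
  mark_mod_four := by show (4 * N + 3) % 4 = 3; omega
  lastFed_mem := Or.inr (Set.mem_insert _ _)

theorem Inv.even_or_mod_four_of_tracker (h : κ.Inv) {j : ℕ} (hj : κ.oracle (0, j) = true) :
    j % 2 = 0 ∨ j % 4 = 3 := by
  rcases (h.tracker_row j).1 hj with hj | hj | rfl
  · exact Or.inl hj
  · exact Or.inr (h.fed_mod_four j hj)
  · exact Or.inr h.mark_mod_four

theorem Inv.not_row_subset_cand_row (h : κ.Inv) {g : ℕ} (hg : g ≠ κ.cand) :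
    ¬ row κ.oracle g ⊆ row κ.oracle κ.cand := by
  have odd_not_mem (j : ℕ) (hj : j % 2 = 1) (hf : j ∉ κ.fed) : j ∉ row κ.oracle κ.cand :=
    fun hmem => ((h.cand_row j).1 hmem).elim (by omega) hf
  rcases eq_or_ne g 0 with rfl | hg0
  · have hmark : κ.mark ∈ row κ.oracle 0 := (h.tracker_row _).2 (Or.inr (Or.inr rfl))
    refine fun hsub => odd_not_mem κ.mark (by have := h.mark_mod_four; omega)
      (fun hf => (h.fed_lt_mark _ hf).false) (hsub hmark)
  · obtain ⟨j, hj4, hj⟩ := h.exists_mod_four_eq_one g hg hg0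
    refine fun hsub => odd_not_mem j (by omega) (fun hf => ?_) (hsub hj)
    have := h.fed_mod_four j hf
    omega

end Config

structure Stage extends Config where
  xs : List ℕ
  bound : ℕ

def enumValue (t : ℕ) (σ : Stage) : ℕ := if t % 2 = 0 then t else σ.lastFed

/-- Promotions happen only at even stages, so a mark fed at stage `t` is the example at `t + 1`. -/
def Promotes (G : List ℕ → (ℕ × ℕ → Bool) → ℕ) (t : ℕ) (σ : Stage) : Prop :=
  t % 2 = 0 ∧ G σ.xs σ.oracle = σ.cand

instance (G : List ℕ → (ℕ × ℕ → Bool) → ℕ) (t : ℕ) (σ : Stage) :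
    Decidable (Promotes G t σ) :=
  inferInstanceAs (Decidable (_ ∧ _))

section Run

variable {G : List ℕ → (ℕ × ℕ → Bool) → ℕ} (hG : QueriesFinitely G)

noncomputable def nextBound (t : ℕ) (σ : Stage) : ℕ :=
  σ.bound + hG.useBound σ.xs σ.oracle + t + σ.mark + σ.cand + 1

noncomputable def step (t : ℕ) (σ : Stage) : Stage where
  toConfig := if Promotes G t σ then σ.promote (nextBound hG t σ) else σ.toConfig
  xs := σ.xs ++ [enumValue t σ]
  bound := nextBound hG t σ

noncomputable def run : ℕ → Stage
  | 0 => { toConfig := Config.init, xs := [], bound := 0 }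
  | t + 1 => step hG t (run t)

noncomputable def enumeration (t : ℕ) : ℕ := enumValue t (run hG t)

noncomputable def limitOracle : ℕ × ℕ → Bool :=
  stableLimit (fun t => (run hG t).oracle) fun p => p.1 + p.2

variable {hG} {t : ℕ}

theorem run_succ_of_promotes (h : Promotes G t (run hG t)) :
    (run hG (t + 1)).toConfig = (run hG t).promote (nextBound hG t (run hG t)) :=
  if_pos h

theorem run_succ_of_not_promotes (h : ¬ Promotes G t (run hG t)) :
    (run hG (t + 1)).toConfig = (run hG t).toConfig :=
  if_neg h

theorem inv_run (t : ℕ) : (run hG t).Inv := by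
  induction t with
  | zero => exact Config.inv_init
  | succ t ih =>
    show Config.Inv (run hG (t + 1)).toConfig
    by_cases h : Promotes G t (run hG t)
    · rw [run_succ_of_promotes h]
      exact ih.promote (by unfold nextBound; omega) (by unfold nextBound; omega)
    · rwa [run_succ_of_not_promotes h]

theorem xs_run (t : ℕ) : (run hG t).xs = (List.range t).map (enumeration hG) := by
  induction t with
  | zero => rfl
  | succ t ih => rw [List.range_succ, List.map_append, ← ih]; rfl

theorem bound_monotone : Monotone fun t => (run hG (t + 1)).bound :=
  monotone_nat_of_le_succ fun t => by
    show (run hG (t + 1)).bound ≤ nextBound hG (t + 1) (run hG (t + 1))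
    unfold nextBound; omega

theorem oracle_succ_of_lt {p : ℕ × ℕ} (hp : p.1 + p.2 < (run hG (t + 1)).bound) :
    (run hG (t + 1)).oracle p = (run hG t).oracle p := by
  show (run hG (t + 1)).toConfig.oracle p = _
  by_cases h : Promotes G t (run hG t)
  · rw [run_succ_of_promotes h]
    exact Config.promote_oracle_of_lt hp
  · rw [run_succ_of_not_promotes h]

theorem limitOracle_eq {p : ℕ × ℕ} (hp : p.1 + p.2 < (run hG (t + 1)).bound) :
    limitOracle hG p = (run hG t).oracle p :=
  stableLimit_eq bound_monotone (fun t => by show t ≤ nextBound hG t _; unfold nextBound; omega)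
    (fun _ _ => oracle_succ_of_lt) hp

theorem limitOracle_eq_of_le {p : ℕ × ℕ} (hp : p.1 + p.2 ≤ t) :
    limitOracle hG p = (run hG t).oracle p :=
  limitOracle_eq (by show _ < nextBound hG t _; unfold nextBound; omega)

theorem apply_limitOracle (t : ℕ) :
    G (run hG t).xs (limitOracle hG) = G (run hG t).xs (run hG t).oracle :=
  hG.apply_eq_of_agree fun _ _ =>
    limitOracle_eq (by show _ < nextBound hG t _; unfold nextBound; omega)

theorem fed_monotone : Monotone fun t => (run hG t).fed :=
  monotone_nat_of_le_succ fun t => by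
    show _ ⊆ (run hG (t + 1)).toConfig.fed
    by_cases h : Promotes G t (run hG t)
    · rw [run_succ_of_promotes h]
      exact Set.subset_insert _ _
    · rw [run_succ_of_not_promotes h]

theorem enumeration_of_even (ht : t % 2 = 0) : enumeration hG t = t := if_pos ht

theorem enumeration_even_or_mem_fed (t : ℕ) :
    enumeration hG t % 2 = 0 ∨ enumeration hG t ∈ (run hG t).fed := by
  unfold enumeration enumValue
  split_ifs with ht
  · exact Or.inl ht
  · exact (inv_run t).lastFed_mem

theorem exists_enumeration_eq_of_mem_fed {j : ℕ} (hj : j ∈ (run hG t).fed) :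
    ∃ u, enumeration hG u = j := by
  induction t with
  | zero => exact absurd hj (Set.notMem_empty j)
  | succ t ih =>
    replace hj : j ∈ (run hG (t + 1)).toConfig.fed := hj
    by_cases h : Promotes G t (run hG t)
    · rw [run_succ_of_promotes h] at hj
      obtain rfl | hj := hj
      · have hlast : (run hG (t + 1)).lastFed = (run hG t).mark :=
          congrArg Config.lastFed (run_succ_of_promotes h)
        refine ⟨t + 1, ?_⟩
        rw [enumeration, enumValue, if_neg (by have := h.1; omega), hlast]
      · exact ih hj
    · rw [run_succ_of_not_promotes h] at hj
      exact ih hj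

theorem limitOracle_of_even {i j : ℕ} (hj : j % 2 = 0) : limitOracle hG (i, j) = true :=
  (inv_run _).even_mem i j hj

theorem row_limitOracle_infinite (i : ℕ) : (row (limitOracle hG) i).Infinite :=
  Set.infinite_of_injective_forall_mem (f := fun k => 2 * k) (fun _ _ h => by simpa using h)
    fun _ => limitOracle_of_even (by omega)

theorem even_or_mod_four_of_limitOracle_tracker {j : ℕ} (hj : limitOracle hG (0, j) = true) :
    j % 2 = 0 ∨ j % 4 = 3 := by
  rw [limitOracle_eq_of_le (t := j) (by simp)] at hj
  exact (inv_run j).even_or_mod_four_of_tracker hj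

theorem enumeration_mem_row_tracker (u : ℕ) : enumeration hG u ∈ row (limitOracle hG) 0 := by
  rcases enumeration_even_or_mem_fed u with h | h
  · exact limitOracle_of_even h
  · show limitOracle hG (0, _) = true
    rw [limitOracle_eq_of_le (t := u + enumeration hG u) (by simp)]
    exact ((inv_run _).tracker_row _).2 (Or.inr (Or.inl (fed_monotone (Nat.le_add_right u _) h)))

theorem exists_enumeration_eq_of_mem_row_tracker
    (hinf : ∀ T, ∃ t ≥ T, Promotes G t (run hG t)) {j : ℕ}
    (hj : j ∈ row (limitOracle hG) 0) : ∃ u, enumeration hG u = j := by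
  obtain ⟨u, hju, hu⟩ := hinf j
  replace hj : limitOracle hG (0, j) = true := hj
  rw [limitOracle_eq_of_le (t := u + 1) (by omega)] at hj
  rcases ((inv_run (u + 1)).tracker_row j).1 hj with hj | hj | hj
  · exact ⟨j, enumeration_of_even hj⟩
  · exact exists_enumeration_eq_of_mem_fed hj
  · have hm : (run hG (u + 1)).mark = 4 * nextBound hG u (run hG u) + 3 :=
      congrArg Config.mark (run_succ_of_promotes hu)
    have : u ≤ nextBound hG u (run hG u) := by unfold nextBound; omega
    omega

theorem frequently_not_row_subset_tracker (hinf : ∀ T, ∃ t ≥ T, Promotes G t (run hG t))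
    (T₀ : ℕ) : ∃ t, T₀ ≤ t ∧
      ¬ row (limitOracle hG) (G ((List.range t).map (enumeration hG)) (limitOracle hG)) ⊆
        row (limitOracle hG) 0 := by
  obtain ⟨t, ht, hprom⟩ := hinf T₀
  refine ⟨t, ht, ?_⟩
  rw [← xs_run, apply_limitOracle (hG := hG), hprom.2]
  set N := nextBound hG t (run hG t) with hN
  have hcfg := run_succ_of_promotes hprom
  have hc : (run hG t).cand < N := by rw [hN, nextBound]; omega
  have hjunk : limitOracle hG ((run hG t).cand, 4 * N + 1) = true := by
    have hm : (run hG (t + 1)).mark = 4 * N + 3 := congrArg Config.mark hcfg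
    have hc' : (run hG (t + 1)).cand = N + 1 := congrArg Config.cand hcfg
    have hb : (run hG t).cand + (4 * N + 1) < nextBound hG (t + 1) (run hG (t + 1)) := by
      rw [nextBound, hm, hc']; omega
    rw [limitOracle_eq hb]
    show (run hG (t + 1)).toConfig.oracle _ = true
    rw [hcfg]
    exact Config.promote_oracle_cand hc
  intro hsub
  have := even_or_mod_four_of_limitOracle_tracker (hsub hjunk)
  omega

section FinitelyManyPromotions

variable {T : ℕ}

theorem toConfig_eq_of_le (hT : ∀ t ≥ T, ¬ Promotes G t (run hG t)) (ht : T ≤ t) :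
    (run hG t).toConfig = (run hG T).toConfig := by
  induction t, ht using Nat.le_induction with
  | base => rfl
  | succ t ht ih => rw [run_succ_of_not_promotes (hT t ht), ih]

theorem limitOracle_eq_of_stable (hT : ∀ t ≥ T, ¬ Promotes G t (run hG t)) :
    limitOracle hG = (run hG T).oracle := funext fun p => by
  rw [limitOracle_eq_of_le (le_max_right T (p.1 + p.2))]
  exact congrArg (Config.oracle · p) (toConfig_eq_of_le hT (le_max_left _ _))

theorem enumeration_mem_row_cand (hT : ∀ t ≥ T, ¬ Promotes G t (run hG t)) (u : ℕ) :
    enumeration hG u ∈ row (limitOracle hG) (run hG T).cand := by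
  rw [limitOracle_eq_of_stable hT]
  refine ((inv_run T).cand_row _).2 ((enumeration_even_or_mem_fed u).imp_right fun h => ?_)
  have hfed : (run hG (max u T)).fed = (run hG T).fed :=
    congrArg Config.fed (toConfig_eq_of_le hT (le_max_right u T))
  exact hfed ▸ fed_monotone (le_max_left u T) h

theorem exists_enumeration_eq_of_mem_row_cand (hT : ∀ t ≥ T, ¬ Promotes G t (run hG t))
    {j : ℕ} (hj : j ∈ row (limitOracle hG) (run hG T).cand) : ∃ u, enumeration hG u = j := by
  rw [limitOracle_eq_of_stable hT] at hj
  rcases ((inv_run T).cand_row j).1 hj with h | h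
  · exact ⟨j, enumeration_of_even h⟩
  · exact exists_enumeration_eq_of_mem_fed h

theorem frequently_not_row_subset_cand (hT : ∀ t ≥ T, ¬ Promotes G t (run hG t)) (T₀ : ℕ) :
    ∃ t, T₀ ≤ t ∧
      ¬ row (limitOracle hG) (G ((List.range t).map (enumeration hG)) (limitOracle hG)) ⊆
        row (limitOracle hG) (run hG T).cand := by
  obtain ⟨t, ht₀, hT₀, ht⟩ : ∃ t, T₀ ≤ t ∧ T ≤ t ∧ t % 2 = 0 :=
    ⟨2 * (T₀ + T), by omega, by omega, by omega⟩
  have hne : G (run hG t).xs (run hG t).oracle ≠ (run hG t).cand := fun h => hT t hT₀ ⟨ht, h⟩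
  have hnot := (inv_run t).not_row_subset_cand_row hne
  refine ⟨t, ht₀, ?_⟩
  rw [← xs_run, apply_limitOracle (hG := hG), limitOracle_eq_of_stable hT]
  rwa [toConfig_eq_of_le hT hT₀] at hnot ⊢

end FinitelyManyPromotions

end Run

end MembershipQueryDiagonal

/-- There is no deterministic proper generator, using only membership queries, that
properly generates in the limit every countable hypothesis class over ℕ with all
supports infinite.  A membership-query generator is modeled as a map
`G : List ℕ → ((ℕ × ℕ) → Bool) → ℕ` taking the example sequence and a membership
oracle `F` (where `F (i, j) = true` iff `j ∈ supp(h_i)`) and returning the index of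
its output hypothesis; making only finitely many queries is captured by the
condition that the output depends on finitely many oracle values.  For every such
generator there is a class (given by a decidable membership function `F`), a target
index, and an enumeration of the target's support on which the generator
overgeneralizes at infinitely many times. -/
theorem statement17 (G : List ℕ → ((ℕ × ℕ) → Bool) → ℕ)
    (hfin : ∀ (l : List ℕ) (F : (ℕ × ℕ) → Bool), ∃ Qs : Finset (ℕ × ℕ),
      ∀ F' : (ℕ × ℕ) → Bool, (∀ q ∈ Qs, F' q = F q) → G l F' = G l F) :
    ∃ (F : (ℕ × ℕ) → Bool) (istar : ℕ) (x : ℕ → ℕ),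
      (∀ i : ℕ, {j | F (i, j) = true}.Infinite) ∧
      (∀ t, x t ∈ {j | F (istar, j) = true}) ∧
      (∀ j, F (istar, j) = true → ∃ t, x t = j) ∧
      (∀ T : ℕ, ∃ t, T ≤ t ∧
        ¬ {j | F (G ((List.range t).map x) F, j) = true} ⊆
            {j | F (istar, j) = true}) := by
  open MembershipQueryDiagonal in
  by_cases hinf : ∀ T, ∃ t ≥ T, Promotes G t (run hfin t)
  · exact ⟨limitOracle hfin, 0, enumeration hfin, row_limitOracle_infinite,
      enumeration_mem_row_tracker, fun _ => exists_enumeration_eq_of_mem_row_tracker hinf,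
      frequently_not_row_subset_tracker hinf⟩
  · push Not at hinf
    obtain ⟨T, hT⟩ := hinf
    exact ⟨limitOracle hfin, (run hfin T).cand, enumeration hfin, row_limitOracle_infinite,
      enumeration_mem_row_cand hT, fun _ => exists_enumeration_eq_of_mem_row_cand hT,
      frequently_not_row_subset_cand hT⟩
end
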